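/- arXiv:2601.10418 — 5 statements merged into one kernel-verified Lean document; each statement's English description precedes it below -/
import Mathlib

section
/- Let P be a probability distribution on a measurable space 𝒳 and V₁, V₂ : 𝒳 → [0, C] measurable with V₁(x) ≤ V₂(x) for all x. Then for any α, n > 0: sqrt(Var_P(V₂(X)))/sqrt(n) ≤ sqrt(Var_P(V₁(X)))/sqrt(n) + (1/α)·E_P[V₂(X) - V₁(X)] + C·α/(4n). -/
open MeasureTheory

private lemma intg_of_bdd {𝒳 : Type*} [MeasurableSpace 𝒳] (P : Measure 𝒳) [IsFiniteMeasure P]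
    {f : 𝒳 → ℝ} (hf : Measurable f) {M : ℝ} (hb : ∀ x, |f x| ≤ M) : Integrable f P :=
  memLp_one_iff_integrable.mp <| MemLp.of_bound hf.aestronglyMeasurable M
    (Filter.Eventually.of_forall (by simpa [Real.norm_eq_abs] using hb))

set_option maxHeartbeats 1600000 in
/-- Variance-difference bound: for measurable `V₁ ≤ V₂` with values in `[0,C]` and a
probability measure `P`, `√Var(V₂)/√n ≤ √Var(V₁)/√n + (1/α)·E[V₂-V₁] + Cα/(4n)`. -/
theorem stmt_8 {𝒳 : Type*} [MeasurableSpace 𝒳] (P : Measure 𝒳) [IsProbabilityMeasure P]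
    (C : ℝ) (V₁ V₂ : 𝒳 → ℝ) (hm1 : Measurable V₁) (hm2 : Measurable V₂)
    (h1 : ∀ x, V₁ x ∈ Set.Icc 0 C) (h2 : ∀ x, V₂ x ∈ Set.Icc 0 C)
    (hle : ∀ x, V₁ x ≤ V₂ x) (α n : ℝ) (hα : 0 < α) (hn : 0 < n) :
    Real.sqrt (∫ x, (V₂ x) ^ 2 ∂P - (∫ x, V₂ x ∂P) ^ 2) / Real.sqrt n ≤
      Real.sqrt (∫ x, (V₁ x) ^ 2 ∂P - (∫ x, V₁ x ∂P) ^ 2) / Real.sqrt n +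
        (1 / α) * ∫ x, (V₂ x - V₁ x) ∂P + C * α / (4 * n) := by
  have hne : Nonempty 𝒳 := by
    by_contra h
    have h' : IsEmpty 𝒳 := not_nonempty_iff.mp h
    have : (P Set.univ) = 1 := measure_univ
    rw [Set.univ_eq_empty_iff.mpr h'] at this
    simp at this
  obtain ⟨x₀⟩ := hne
  have hC : 0 ≤ C := (h1 x₀).1.trans (h1 x₀).2
  -- bounds
  have hb1 : ∀ x, |V₁ x| ≤ C := fun x => abs_le.mpr ⟨by linarith [(h1 x).1], (h1 x).2⟩
  have hb2 : ∀ x, |V₂ x| ≤ C := fun x => abs_le.mpr ⟨by linarith [(h2 x).1], (h2 x).2⟩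
  -- integrability of basic functions
  have int1 : Integrable V₁ P := intg_of_bdd P hm1 hb1
  have int2 : Integrable V₂ P := intg_of_bdd P hm2 hb2
  set a1 : ℝ := ∫ x, V₁ x ∂P with ha1
  set a2 : ℝ := ∫ x, V₂ x ∂P with ha2
  set W : 𝒳 → ℝ := fun x => V₁ x - a1 with hW
  set D : 𝒳 → ℝ := fun x => (V₂ x - V₁ x) - (a2 - a1) with hD
  have hmW : Measurable W := hm1.sub measurable_const
  have hmD : Measurable D := (hm2.sub hm1).sub measurable_const
  have hbW : ∀ x, |W x| ≤ C + |a1| := fun x => by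
    show |V₁ x - a1| ≤ C + |a1|
    have h := abs_sub (V₁ x) a1
    linarith [hb1 x]
  have hbD : ∀ x, |D x| ≤ 2 * C + |a2 - a1| := fun x => by
    show |(V₂ x - V₁ x) - (a2 - a1)| ≤ 2 * C + |a2 - a1|
    have h := abs_sub (V₂ x - V₁ x) (a2 - a1)
    have h2 := abs_sub (V₂ x) (V₁ x)
    linarith [hb1 x, hb2 x]
  have intW : Integrable W P := intg_of_bdd P hmW hbW
  have intD : Integrable D P := intg_of_bdd P hmD hbD
  have intW2 : Integrable (fun x => W x ^ 2) P := by
    refine intg_of_bdd P (hmW.pow_const 2) (M := (C + |a1|) ^ 2) fun x => ?_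
    rw [abs_pow]; exact pow_le_pow_left₀ (abs_nonneg _) (hbW x) 2
  have intD2 : Integrable (fun x => D x ^ 2) P := by
    refine intg_of_bdd P (hmD.pow_const 2) (M := (2 * C + |a2 - a1|) ^ 2) fun x => ?_
    rw [abs_pow]; exact pow_le_pow_left₀ (abs_nonneg _) (hbD x) 2
  have intWD : Integrable (fun x => W x * D x) P := by
    refine intg_of_bdd P (hmW.mul hmD) (M := (C + |a1|) * (2 * C + |a2 - a1|)) fun x => ?_
    rw [abs_mul]
    exact mul_le_mul (hbW x) (hbD x) (abs_nonneg _) (by positivity)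
  have int1sq : Integrable (fun x => V₁ x ^ 2) P := by
    refine intg_of_bdd P (hm1.pow_const 2) (M := C ^ 2) fun x => ?_
    rw [abs_pow]; exact pow_le_pow_left₀ (abs_nonneg _) (hb1 x) 2
  have int2sq : Integrable (fun x => V₂ x ^ 2) P := by
    refine intg_of_bdd P (hm2.pow_const 2) (M := C ^ 2) fun x => ?_
    rw [abs_pow]; exact pow_le_pow_left₀ (abs_nonneg _) (hb2 x) 2
  have intd : Integrable (fun x => V₂ x - V₁ x) P := int2.sub int1
  have hbd : ∀ x, |V₂ x - V₁ x| ≤ C := fun x =>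
    abs_le.mpr ⟨by linarith [hle x, (h1 x).1, (h2 x).2], by linarith [(h1 x).1, (h2 x).2]⟩
  have intd2 : Integrable (fun x => (V₂ x - V₁ x) ^ 2) P := by
    refine intg_of_bdd P ((hm2.sub hm1).pow_const 2) (M := C ^ 2) fun x => ?_
    rw [abs_pow]; exact pow_le_pow_left₀ (abs_nonneg _) (hbd x) 2
  set xd : ℝ := ∫ x, (V₂ x - V₁ x) ∂P with hxd
  have hδ : xd = a2 - a1 := by rw [hxd, integral_sub int2 int1]
  have hxd0 : 0 ≤ xd := integral_nonneg fun x => by simp [hle x]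
  -- expansion helper
  have expand : ∀ (f : 𝒳 → ℝ) (c : ℝ), Measurable f → Integrable f P →
      Integrable (fun x => f x ^ 2) P → (∫ x, f x ∂P) = c →
      ∫ x, (f x - c) ^ 2 ∂P = (∫ x, f x ^ 2 ∂P) - c ^ 2 := by
    intro f c hf hif hif2 hc
    have hpt : (fun x => (f x - c) ^ 2) = fun x => (f x ^ 2 + c ^ 2) - c * (2 * f x) := by
      funext x; ring
    have i1 : Integrable (fun x => f x ^ 2 + c ^ 2) P := hif2.add (integrable_const _)
    have i2 : Integrable (fun x => c * (2 * f x)) P := (hif.const_mul 2).const_mul c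
    rw [hpt, integral_sub i1 i2, integral_add hif2 (integrable_const _),
      integral_const_mul c, integral_const_mul 2, hc]
    simp [measure_univ]
    ring
  have eq1 : (∫ x, V₁ x ^ 2 ∂P) - a1 ^ 2 = ∫ x, W x ^ 2 ∂P :=
    (expand V₁ a1 hm1 int1 int1sq rfl).symm
  have eqD : (∫ x, D x ^ 2 ∂P) = (∫ x, (V₂ x - V₁ x) ^ 2 ∂P) - (a2 - a1) ^ 2 :=
    expand (fun x => V₂ x - V₁ x) (a2 - a1) (hm2.sub hm1) intd intd2 (by rw [← hxd]; exact hδ)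
  have eq2 : (∫ x, V₂ x ^ 2 ∂P) - a2 ^ 2 = ∫ x, (V₂ x - a2) ^ 2 ∂P :=
    (expand V₂ a2 hm2 int2 int2sq rfl).symm
  -- decomposition
  have decomp : ∫ x, (V₂ x - a2) ^ 2 ∂P =
      ((∫ x, W x ^ 2 ∂P) + (∫ x, D x ^ 2 ∂P)) + 2 * ∫ x, W x * D x ∂P := by
    have hpt : (fun x => (V₂ x - a2) ^ 2) = fun x => (W x ^ 2 + D x ^ 2) + 2 * (W x * D x) := by
      funext x; simp only [hW, hD]; ring
    have i1 : Integrable (fun x => W x ^ 2 + D x ^ 2) P := intW2.add intD2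
    have i2 : Integrable (fun x => (2 : ℝ) * (W x * D x)) P := intWD.const_mul 2
    rw [hpt, integral_add i1 i2, integral_add intW2 intD2, integral_const_mul]
  -- Cauchy–Schwarz
  have habs2 : ∀ w : ℝ, |w| ^ (2 : ℝ) = w ^ 2 := fun w => by
    rw [show (2 : ℝ) = ((2 : ℕ) : ℝ) by norm_num, Real.rpow_natCast, sq_abs]
  have hmemW : MemLp (fun x => |W x|) (ENNReal.ofReal 2) P :=
    MemLp.of_bound hmW.abs.aestronglyMeasurable (C + |a1|)
      (Filter.Eventually.of_forall fun x => by
        simpa [Real.norm_eq_abs, abs_abs] using hbW x)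
  have hmemD : MemLp (fun x => |D x|) (ENNReal.ofReal 2) P :=
    MemLp.of_bound hmD.abs.aestronglyMeasurable (2 * C + |a2 - a1|)
      (Filter.Eventually.of_forall fun x => by
        simpa [Real.norm_eq_abs, abs_abs] using hbD x)
  have cs := integral_mul_le_Lp_mul_Lq_of_nonneg (μ := P) (p := 2) (q := 2)
    (Real.holderConjugate_iff.mpr ⟨one_lt_two, by norm_num⟩)
    (Filter.Eventually.of_forall fun x => abs_nonneg (W x))
    (Filter.Eventually.of_forall fun x => abs_nonneg (D x)) hmemW hmemD
  simp_rw [habs2] at cs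
  rw [← Real.sqrt_eq_rpow, ← Real.sqrt_eq_rpow] at cs
  have hI : (∫ x, W x * D x ∂P) ≤
      Real.sqrt (∫ x, W x ^ 2 ∂P) * Real.sqrt (∫ x, D x ^ 2 ∂P) := by
    refine le_trans ?_ cs
    refine integral_mono intWD (intWD.abs.congr ?_) fun x => by
      simpa [abs_mul] using le_abs_self (W x * D x)
    exact Filter.Eventually.of_forall fun x => by simp [abs_mul]
  have hS1 : (0 : ℝ) ≤ ∫ x, W x ^ 2 ∂P := integral_nonneg fun x => sq_nonneg _
  have hSD : (0 : ℝ) ≤ ∫ x, D x ^ 2 ∂P := integral_nonneg fun x => sq_nonneg _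
  -- sqrt of variance inequality
  have key1 : Real.sqrt ((∫ x, V₂ x ^ 2 ∂P) - a2 ^ 2) ≤
      Real.sqrt ((∫ x, V₁ x ^ 2 ∂P) - a1 ^ 2) + Real.sqrt (∫ x, D x ^ 2 ∂P) := by
    rw [eq1, eq2, decomp]
    have hb : ((∫ x, W x ^ 2 ∂P) + (∫ x, D x ^ 2 ∂P)) + 2 * ∫ x, W x * D x ∂P ≤
        (Real.sqrt (∫ x, W x ^ 2 ∂P) + Real.sqrt (∫ x, D x ^ 2 ∂P)) ^ 2 := by
      have e1 := Real.sq_sqrt hS1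
      have e2 := Real.sq_sqrt hSD
      nlinarith [hI]
    calc Real.sqrt (((∫ x, W x ^ 2 ∂P) + (∫ x, D x ^ 2 ∂P)) + 2 * ∫ x, W x * D x ∂P)
        ≤ Real.sqrt ((Real.sqrt (∫ x, W x ^ 2 ∂P) + Real.sqrt (∫ x, D x ^ 2 ∂P)) ^ 2) :=
          Real.sqrt_le_sqrt hb
      _ = _ := Real.sqrt_sq (by positivity)
  -- bound on ∫ D²
  have hSDle : (∫ x, D x ^ 2 ∂P) ≤ C * xd := by
    rw [eqD]
    have h2 : (∫ x, (V₂ x - V₁ x) ^ 2 ∂P) ≤ ∫ x, C * (V₂ x - V₁ x) ∂P := by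
      refine integral_mono intd2 (intd.const_mul C) fun x => ?_
      have h0 := hle x
      have hc := hbd x
      nlinarith [abs_le.mp hc]
    rw [integral_const_mul, ← hxd] at h2
    nlinarith [sq_nonneg (a2 - a1), hC, hxd0]
  have key2 : Real.sqrt (∫ x, D x ^ 2 ∂P) ≤ Real.sqrt (C * xd) := Real.sqrt_le_sqrt hSDle
  -- AM-GM step
  have hsn : (0 : ℝ) < Real.sqrt n := Real.sqrt_pos.mpr hn
  have key3 : Real.sqrt (C * xd) / Real.sqrt n ≤ (1 / α) * xd + C * α / (4 * n) := by
    rw [← Real.sqrt_div (by positivity)]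
    have hrhs : (0 : ℝ) ≤ (1 / α) * xd + C * α / (4 * n) := by positivity
    have hsq : C * xd / n ≤ ((1 / α) * xd + C * α / (4 * n)) ^ 2 := by
      have hkey : C * xd / n = 4 * ((1 / α) * xd) * (C * α / (4 * n)) := by
        field_simp
      rw [hkey]
      nlinarith [sq_nonneg ((1 / α) * xd - C * α / (4 * n))]
    calc Real.sqrt (C * xd / n) ≤ Real.sqrt (((1 / α) * xd + C * α / (4 * n)) ^ 2) :=
          Real.sqrt_le_sqrt hsq
      _ = _ := Real.sqrt_sq hrhs
  -- conclude
  have step : Real.sqrt ((∫ x, V₂ x ^ 2 ∂P) - a2 ^ 2) / Real.sqrt n ≤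
      (Real.sqrt ((∫ x, V₁ x ^ 2 ∂P) - a1 ^ 2) + Real.sqrt (C * xd)) / Real.sqrt n := by
    exact div_le_div_of_nonneg_right (key1.trans (add_le_add_right key2 _)) hsn.le
  rw [add_div] at step
  linarith [step, key3]
end

section
/- Let p be a probability vector in the simplex Δ^d, v ∈ [0, H]^d, and α ≥ 0. Define f(p, v, α) = pᵀv + max{α·sqrt(Var_p(v)), α²·H}, where Var_p(v) = ∑ᵢ pᵢvᵢ² - (∑ᵢ pᵢvᵢ)². Then f(p, v, α) is non-decreasing in each entry of v. -/
/-!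
Raising `v` to `w` raises the mean by `δ = pᵀw - pᵀv ≥ 0`, and lowers the variance by at most
`2 H δ`, since `E v² ≤ E w²` and `(pᵀw)² - (pᵀv)² ≤ 2 H δ`. The bonus `max (α √V) (α² H)` can only
drop when `α √V` exceeds `α² H`, where the slope of `V ↦ α √V` is at most `1 / (2 α H)`; so the
bonus drops by at most `δ`, which the mean increase pays for.
-/

open Finset

section WeightedMoments

variable {ι : Type*} {s : Finset ι} {p v w : ι → ℝ}

theorem sq_sum_mul_le_sum_mul_sq (hp : ∀ i ∈ s, 0 ≤ p i) (hsum : ∑ i ∈ s, p i = 1) :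
    (∑ i ∈ s, p i * v i) ^ 2 ≤ ∑ i ∈ s, p i * v i ^ 2 := by
  simpa only [smul_eq_mul] using
    (even_two.convexOn_pow (𝕜 := ℝ)).map_sum_le hp hsum fun i _ => Set.mem_univ (v i)

theorem sum_mul_le_sum_mul (hp : ∀ i ∈ s, 0 ≤ p i) (hvw : ∀ i ∈ s, v i ≤ w i) :
    ∑ i ∈ s, p i * v i ≤ ∑ i ∈ s, p i * w i :=
  sum_le_sum fun i hi => mul_le_mul_of_nonneg_left (hvw i hi) (hp i hi)

theorem sum_mul_le_of_le {H : ℝ} (hp : ∀ i ∈ s, 0 ≤ p i) (hsum : ∑ i ∈ s, p i = 1)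
    (hwH : ∀ i ∈ s, w i ≤ H) : ∑ i ∈ s, p i * w i ≤ H :=
  calc ∑ i ∈ s, p i * w i ≤ ∑ i ∈ s, p i * H := sum_mul_le_sum_mul hp hwH
    _ = H := by rw [← sum_mul, hsum, one_mul]

theorem variance_sub_variance_le {H : ℝ} (hp : ∀ i ∈ s, 0 ≤ p i) (hsum : ∑ i ∈ s, p i = 1)
    (hv : ∀ i ∈ s, 0 ≤ v i) (hvw : ∀ i ∈ s, v i ≤ w i) (hwH : ∀ i ∈ s, w i ≤ H) :
    (∑ i ∈ s, p i * v i ^ 2 - (∑ i ∈ s, p i * v i) ^ 2) -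
        (∑ i ∈ s, p i * w i ^ 2 - (∑ i ∈ s, p i * w i) ^ 2) ≤
      2 * H * (∑ i ∈ s, p i * w i - ∑ i ∈ s, p i * v i) := by
  have hsq : ∑ i ∈ s, p i * v i ^ 2 ≤ ∑ i ∈ s, p i * w i ^ 2 :=
    sum_mul_le_sum_mul hp fun i hi => pow_le_pow_left₀ (hv i hi) (hvw i hi) 2
  have hmean : ∑ i ∈ s, p i * v i ≤ ∑ i ∈ s, p i * w i := sum_mul_le_sum_mul hp hvw
  have hwH' : ∑ i ∈ s, p i * w i ≤ H := sum_mul_le_of_le hp hsum hwH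
  have hvH : ∑ i ∈ s, p i * v i ≤ H := hmean.trans hwH'
  nlinarith

end WeightedMoments

theorem max_mul_sqrt_le_max_mul_sqrt_add {α H x y δ : ℝ} (hα : 0 ≤ α) (hy : 0 ≤ y)
    (hδ : 0 ≤ δ) (hxy : x - y ≤ 2 * H * δ) :
    max (α * √x) (α ^ 2 * H) ≤ max (α * √y) (α ^ 2 * H) + δ := by
  set b := max (α * √y) (α ^ 2 * H)
  rcases le_or_gt (α * √x) b with hle | hlt
  · exact max_le (by linarith) (by linarith [le_max_right (α * √y) (α ^ 2 * H)])
  have hb : α * √y ≤ b := le_max_left _ _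
  have hbH : α ^ 2 * H ≤ b := le_max_right _ _
  have hb0 : 0 ≤ b := (mul_nonneg hα (Real.sqrt_nonneg y)).trans hb
  have hx : 0 ≤ x := Real.sqrt_pos.mp (pos_of_mul_pos_right (hb0.trans_lt hlt) hα) |>.le
  have hy2 : α ^ 2 * y ≤ b ^ 2 := by
    rw [← Real.sq_sqrt hy, ← mul_pow]
    exact pow_le_pow_left₀ (mul_nonneg hα (Real.sqrt_nonneg y)) hb 2
  -- `(α√x - b)(α√x + b) = α² x - b² ≤ α² (x - y) ≤ 2 α² H δ ≤ (α√x + b) δ`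
  have key : (α * √x - b) * (α * √x + b) ≤ δ * (α * √x + b) := by
    have hsq : (α * √x) ^ 2 = α ^ 2 * x := by rw [mul_pow, Real.sq_sqrt hx]
    have hscale : α ^ 2 * (x - y) ≤ α ^ 2 * (2 * H * δ) := by gcongr
    nlinarith
  have := le_of_mul_le_mul_right key (by linarith)
  rw [max_le_iff]
  constructor <;> linarith

theorem stmt_9_general (d : ℕ) (p : Fin d → ℝ) (hp : ∀ i, 0 ≤ p i) (hsum : ∑ i, p i = 1)
    (H α : ℝ) (hα : 0 ≤ α)
    (v w : Fin d → ℝ) (hv : ∀ i, v i ∈ Set.Icc 0 H) (hw : ∀ i, w i ∈ Set.Icc 0 H)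
    (hvw : ∀ i, v i ≤ w i) :
    ∑ i, p i * v i +
        max (α * Real.sqrt (∑ i, p i * (v i) ^ 2 - (∑ i, p i * v i) ^ 2)) (α ^ 2 * H) ≤
      ∑ i, p i * w i +
        max (α * Real.sqrt (∑ i, p i * (w i) ^ 2 - (∑ i, p i * w i) ^ 2)) (α ^ 2 * H) := by
  have hp' : ∀ i ∈ univ, 0 ≤ p i := fun i _ => hp i
  have hvw' : ∀ i ∈ univ, v i ≤ w i := fun i _ => hvw i
  have hmean := sum_mul_le_sum_mul hp' hvw'
  have hvar_w : 0 ≤ ∑ i, p i * w i ^ 2 - (∑ i, p i * w i) ^ 2 :=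
    sub_nonneg.mpr (sq_sum_mul_le_sum_mul_sq hp' hsum)
  have hdrop := variance_sub_variance_le hp' hsum (fun i _ => (hv i).1) hvw' fun i _ => (hw i).2
  have := max_mul_sqrt_le_max_mul_sqrt_add hα hvar_w (sub_nonneg.mpr hmean) hdrop
  linarith

/-- Monotone-bonus property: for a probability vector `p`, `v ∈ [0,H]^d` and `α ≥ 0`,
the functional `f(p,v,α) = pᵀv + max{α √Var_p(v), α² H}` is non-decreasing in each
entry of `v`. -/
theorem stmt_9 (d : ℕ) (p : Fin d → ℝ) (hp : ∀ i, 0 ≤ p i) (hsum : ∑ i, p i = 1)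
    (H α : ℝ) (hH : 0 ≤ H) (hα : 0 ≤ α)
    (v w : Fin d → ℝ) (hv : ∀ i, v i ∈ Set.Icc 0 H) (hw : ∀ i, w i ∈ Set.Icc 0 H)
    (hvw : ∀ i, v i ≤ w i) :
    ∑ i, p i * v i +
        max (α * Real.sqrt (∑ i, p i * (v i) ^ 2 - (∑ i, p i * v i) ^ 2)) (α ^ 2 * H) ≤
      ∑ i, p i * w i +
        max (α * Real.sqrt (∑ i, p i * (w i) ^ 2 - (∑ i, p i * w i) ^ 2)) (α ^ 2 * H) :=
  stmt_9_general d p hp hsum H α hα v w hv hw hvw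
end

section
/- Let X₁, ..., Xₙ be i.i.d. random variables in [0, C], and define the empirical variance V̂ₙ = (1/n)∑Xᵢ² - ((1/n)∑Xᵢ)² and the true variance Var(X) = E[X²] - (E[X])². Then for any δ ∈ (0,1), with probability at least 1 - δ, |sqrt(V̂ₙ) - sqrt(Var(X))| ≤ 4C·sqrt(ln(2/δ)/n). -/
open MeasureTheory ProbabilityTheory Real

lemma exp_quad {z : ℝ} (hz : |z| ≤ 1) : Real.exp z ≤ 1 + z + (13/18) * z^2 := by
  have h := Real.exp_bound hz (by norm_num : 0 < 3)
  have hs : ∑ m ∈ Finset.range 3, z ^ m / m.factorial = 1 + z + z^2/2 := by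
    norm_num [Finset.sum_range_succ, Nat.factorial]
  rw [hs] at h
  have h3 : |z|^3 ≤ z^2 := by
    have : |z|^3 ≤ |z|^2 := pow_le_pow_of_le_one (abs_nonneg z) hz (by norm_num)
    simpa [sq_abs] using this
  have h2 := (abs_le.mp h).2
  have hnum : ((Nat.succ 3 : ℕ) : ℝ) / ((Nat.factorial 3 : ℕ) * (3:ℕ)) = 2/9 := by
    norm_num [Nat.factorial]
  rw [hnum] at h2
  nlinarith [h3, h2]

lemma mgf_le_quad {Ω : Type*} [MeasurableSpace Ω] {μ : Measure Ω} [IsProbabilityMeasure μ]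
    {V : Ω → ℝ} {lam Q : ℝ} (hm : Measurable V) (hlam : 0 < lam)
    (h1 : ∀ᵐ ω ∂μ, |lam * V ω| ≤ 1) (hmean : ∫ ω, V ω ∂μ = 0)
    (hQ : ∫ ω, (V ω)^2 ∂μ ≤ Q) :
    mgf V μ lam ≤ Real.exp ((13/18) * lam^2 * Q) := by
  have hVbd : ∀ᵐ ω ∂μ, |V ω| ≤ 1/lam := by
    filter_upwards [h1] with ω h
    rw [abs_mul, abs_of_pos hlam] at h
    rw [le_div_iff₀ hlam]; linarith
  have hVint : Integrable V μ :=
    (integrable_const (1/lam)).mono' hm.aestronglyMeasurable (by simpa using hVbd)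
  have hV2int : Integrable (fun ω => (V ω)^2) μ := by
    refine (integrable_const ((1/lam)^2)).mono' (hm.pow_const 2).aestronglyMeasurable ?_
    filter_upwards [hVbd] with ω h
    rw [Real.norm_eq_abs, abs_pow]; exact pow_le_pow_left₀ (abs_nonneg _) h 2
  have hexpint : Integrable (fun ω => Real.exp (lam * V ω)) μ := by
    refine (integrable_const (Real.exp 1)).mono'
      ((hm.const_mul lam).exp).aestronglyMeasurable ?_
    filter_upwards [h1] with ω h
    rw [Real.norm_eq_abs, abs_of_pos (Real.exp_pos _)]
    exact Real.exp_le_exp.mpr ((abs_le.mp h).2)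
  have i1 : Integrable (fun ω => 1 + lam * V ω) μ :=
    (integrable_const 1).add (hVint.const_mul lam)
  have i2 : Integrable (fun ω => ((13/18) * lam^2) * (V ω)^2) μ := hV2int.const_mul _
  have hRint : Integrable (fun ω => 1 + lam * V ω + (13/18) * (lam * V ω)^2) μ := by
    have e : (fun ω => 1 + lam * V ω + (13/18) * (lam * V ω)^2)
        = fun ω => (1 + lam * V ω) + ((13/18) * lam^2) * (V ω)^2 := by ext ω; ring
    rw [e]; exact i1.add i2
  have key : mgf V μ lam ≤ ∫ ω, (1 + lam * V ω + (13/18) * (lam * V ω)^2) ∂μ := by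
    rw [mgf]
    refine integral_mono_ae hexpint hRint ?_
    filter_upwards [h1] with ω h
    exact exp_quad h
  have hint : ∫ ω, (1 + lam * V ω + (13/18) * (lam * V ω)^2) ∂μ
      = 1 + (13/18) * lam^2 * (∫ ω, (V ω)^2 ∂μ) := by
    have efun : (fun ω => 1 + lam * V ω + (13/18) * (lam * V ω)^2)
        = fun ω => (1 + lam * V ω) + ((13/18) * lam^2) * (V ω)^2 := by
      ext ω; ring
    rw [show (∫ ω, (1 + lam * V ω + (13/18) * (lam * V ω)^2) ∂μ)
        = ∫ ω, ((1 + lam * V ω) + ((13/18) * lam^2) * (V ω)^2) ∂μ from by rw [efun],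
      integral_add i1 i2, integral_add (integrable_const 1) (hVint.const_mul lam),
      integral_const_mul, integral_const_mul, hmean]
    simp
  calc mgf V μ lam ≤ 1 + (13/18) * lam^2 * (∫ ω, (V ω)^2 ∂μ) := by rw [← hint]; exact key
    _ ≤ 1 + (13/18) * lam^2 * Q := by nlinarith [sq_nonneg lam]
    _ ≤ Real.exp ((13/18) * lam^2 * Q) := by
        linarith [Real.add_one_le_exp ((13/18) * lam^2 * Q)]

lemma chernoff_bd {Ω : Type*} [MeasurableSpace Ω] {μ : Measure Ω} [IsProbabilityMeasure μ]
    {n : ℕ} {V : Fin n → Ω → ℝ} (hm : ∀ i, Measurable (V i))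
    (hind : iIndepFun V μ) {lam κ ε : ℝ} (hlam : 0 ≤ lam)
    (hI : ∀ i, Integrable (fun ω => Real.exp (lam * V i ω)) μ)
    (hmgf : ∀ i, mgf (V i) μ lam ≤ Real.exp κ) :
    μ {ω | ε ≤ ∑ i, V i ω} ≤ ENNReal.ofReal (Real.exp (-lam * ε + n * κ)) := by
  have hIs : Integrable (fun ω => Real.exp (lam * (∑ i, V i) ω)) μ :=
    hind.integrable_exp_mul_sum hm (fun i _ => hI i)
  have h := measure_ge_le_exp_mul_mgf (μ := μ) (X := ∑ i, V i) ε hlam hIs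
  have hprod : mgf (∑ i, V i) μ lam ≤ Real.exp κ ^ n := by
    rw [hind.mgf_sum hm]
    calc ∏ i, mgf (V i) μ lam ≤ ∏ _i : Fin n, Real.exp κ :=
          Finset.prod_le_prod (fun i _ => mgf_nonneg) (fun i _ => hmgf i)
      _ = Real.exp κ ^ n := by simp
  have hset : {ω | ε ≤ ∑ i, V i ω} = {ω | ε ≤ (∑ i, V i) ω} := by
    ext ω; simp [Finset.sum_apply]
  have h2 : (μ {ω | ε ≤ ∑ i, V i ω}).toReal ≤ Real.exp (-lam * ε + n * κ) := by
    rw [hset]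
    refine h.trans ?_
    rw [Real.exp_add]
    have he : Real.exp κ ^ n = Real.exp ((n : ℝ) * κ) := by
      rw [← Real.exp_nat_mul, mul_comm]
    calc Real.exp (-lam * ε) * mgf (∑ i, V i) μ lam
        ≤ Real.exp (-lam * ε) * Real.exp κ ^ n :=
          mul_le_mul_of_nonneg_left hprod (Real.exp_pos _).le
      _ = Real.exp (-lam * ε) * Real.exp ((n : ℝ) * κ) := by rw [he]
  rw [← ENNReal.ofReal_toReal (measure_ne_top μ _)]
  exact ENNReal.ofReal_le_ofReal h2

lemma sqrt_sub_sq' {A d : ℝ} : Real.sqrt A - |d| ≤ Real.sqrt (A - d^2) := by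
  rcases le_or_gt (Real.sqrt A) |d| with h | h
  · have := Real.sqrt_nonneg (A - d^2); linarith
  · have hA : 0 ≤ A := by
      by_contra hneg
      rw [Real.sqrt_eq_zero_of_nonpos (le_of_not_ge hneg)] at h
      exact absurd (abs_nonneg d) (not_le.mpr h)
    have hsq := Real.sq_sqrt hA
    have h0 : 0 ≤ Real.sqrt A - |d| := by linarith
    rw [show Real.sqrt A - |d| = Real.sqrt ((Real.sqrt A - |d|)^2) from
      (Real.sqrt_sq h0).symm]
    apply Real.sqrt_le_sqrt
    have habs : |d|^2 = d^2 := sq_abs d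
    nlinarith [abs_nonneg d]

lemma integrable_exp_mul_of_ae {Ω : Type*} [MeasurableSpace Ω] {μ : Measure Ω}
    [IsProbabilityMeasure μ] {V : Ω → ℝ} {lam : ℝ} (hm : Measurable V)
    (h1 : ∀ᵐ ω ∂μ, |lam * V ω| ≤ 1) :
    Integrable (fun ω => Real.exp (lam * V ω)) μ := by
  refine (integrable_const (Real.exp 1)).mono'
    ((hm.const_mul lam).exp).aestronglyMeasurable ?_
  filter_upwards [h1] with ω h
  rw [Real.norm_eq_abs, abs_of_pos (Real.exp_pos _)]
  exact Real.exp_le_exp.mpr ((abs_le.mp h).2)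

lemma integral_sq_sub' {Ω : Type*} [MeasurableSpace Ω] {μ : Measure Ω}
    [IsProbabilityMeasure μ] {W : Ω → ℝ} (hW : Integrable W μ)
    (hW2 : Integrable (fun ω => (W ω)^2) μ) (c : ℝ) :
    ∫ ω, (W ω - c)^2 ∂μ = ∫ ω, (W ω)^2 ∂μ - 2*c*(∫ ω, W ω ∂μ) + c^2 := by
  have e : (fun ω => (W ω - c)^2)
      = fun ω => ((W ω)^2 + (-2*c) * W ω) + c^2 := by ext ω; ring
  have i1 : Integrable (fun ω => (W ω)^2 + (-2*c) * W ω) μ :=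
    hW2.add (hW.const_mul _)
  rw [e, integral_add i1 (integrable_const _), integral_add hW2 (hW.const_mul _),
    integral_const_mul, integral_const]
  simp; ring


lemma sum_center {n : ℕ} (x : Fin n → ℝ) (m : ℝ) :
    ∑ i, (x i - m)^2 = (∑ i, (x i)^2) - 2*m*(∑ i, x i) + n*m^2 := by
  have e : ∀ i ∈ Finset.univ, (x i - m)^2 = ((x i)^2 - 2*m*(x i)) + m^2 :=
    fun i _ => by ring
  rw [Finset.sum_congr rfl e, Finset.sum_add_distrib, Finset.sum_sub_distrib,
    ← Finset.mul_sum, Finset.sum_const, Finset.card_univ, Fintype.card_fin,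
    nsmul_eq_mul]

lemma vhat_eq {n : ℕ} (hn : (n:ℝ) ≠ 0) (x : Fin n → ℝ) (m : ℝ) :
    1/(n:ℝ) * ∑ i, (x i)^2 - (1/(n:ℝ) * ∑ i, x i)^2
    = 1/(n:ℝ) * (∑ i, (x i - m)^2) - (1/(n:ℝ) * (∑ i, x i) - m)^2 := by
  rw [sum_center]
  field_simp
  ring

lemma det_upper {n : ℕ} (hn : (0:ℝ) < n) {x : Fin n → ℝ} {m v C t : ℝ}
    (hC : 0 < C) (ht : 0 ≤ t) (hv : 0 ≤ v)
    (h1 : ∑ i, ((x i - m)^2 - v) ≤ n * (8*C*Real.sqrt v*t + 8*C^2*t^2)) :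
    Real.sqrt (1/(n:ℝ) * ∑ i, (x i)^2 - (1/(n:ℝ) * ∑ i, x i)^2)
      ≤ Real.sqrt v + 4*C*t := by
  have hn' : (n:ℝ) ≠ 0 := ne_of_gt hn
  rw [vhat_eq hn' x m]
  have hsum : ∑ i, ((x i - m)^2 - v) = (∑ i, (x i - m)^2) - n*v := by
    rw [Finset.sum_sub_distrib, Finset.sum_const, Finset.card_univ,
      Fintype.card_fin, nsmul_eq_mul]
  rw [hsum] at h1
  have hA : 1/(n:ℝ) * (∑ i, (x i - m)^2) ≤ v + 8*C*Real.sqrt v*t + 8*C^2*t^2 := by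
    rw [one_div_mul_eq_div, div_le_iff₀ hn]
    nlinarith
  have hs := Real.sq_sqrt hv
  have hsn := Real.sqrt_nonneg v
  calc Real.sqrt (1/(n:ℝ) * (∑ i, (x i - m)^2) - (1/(n:ℝ) * (∑ i, x i) - m)^2)
      ≤ Real.sqrt (1/(n:ℝ) * (∑ i, (x i - m)^2)) :=
        Real.sqrt_le_sqrt (by nlinarith [sq_nonneg (1/(n:ℝ) * (∑ i, x i) - m)])
    _ ≤ Real.sqrt ((Real.sqrt v + 4*C*t)^2) := Real.sqrt_le_sqrt (by nlinarith)
    _ = Real.sqrt v + 4*C*t := Real.sqrt_sq (by positivity)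

lemma det_lower_main {n : ℕ} (hn : (0:ℝ) < n) {x : Fin n → ℝ} {m v C t : ℝ}
    (hC : 0 < C) (ht : 0 < t) (hv : 0 ≤ v)
    (hsv : (27/10)*C*t ≤ Real.sqrt v)
    (h2 : ∑ i, (v - (x i - m)^2) ≤ n * ((13/5)*C*Real.sqrt v*t))
    (h3 : ∑ i, (x i - m) ≤ n * ((5/4)*C*t))
    (h4 : ∑ i, (m - x i) ≤ n * ((5/4)*C*t)) :
    Real.sqrt v - 4*C*t
      ≤ Real.sqrt (1/(n:ℝ) * ∑ i, (x i)^2 - (1/(n:ℝ) * ∑ i, x i)^2) := by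
  have hn' : (n:ℝ) ≠ 0 := ne_of_gt hn
  rw [vhat_eq hn' x m]
  set s := Real.sqrt v with hs_def
  have hs := Real.sq_sqrt hv
  have hsn := Real.sqrt_nonneg v
  set d := 1/(n:ℝ) * (∑ i, x i) - m with hd_def
  -- |d| ≤ (5/4)*C*t
  have hsub : ∑ i, (x i - m) = (∑ i, x i) - n*m := by
    rw [Finset.sum_sub_distrib, Finset.sum_const, Finset.card_univ,
      Fintype.card_fin, nsmul_eq_mul]
  have hsub' : ∑ i, (m - x i) = n*m - ∑ i, x i := by
    rw [Finset.sum_sub_distrib, Finset.sum_const, Finset.card_univ,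
      Fintype.card_fin, nsmul_eq_mul]
  have hd : |d| ≤ (5/4)*C*t := by
    rw [hsub] at h3; rw [hsub'] at h4
    have hdd : d * n = (∑ i, x i) - n*m := by rw [hd_def]; field_simp
    rw [abs_le]
    constructor
    · have h0 : 0 ≤ (d + (5/4)*C*t) * n := by rw [add_mul, hdd]; linarith
      have := (mul_nonneg_iff_of_pos_right hn).mp h0
      linarith
    · have h0 : 0 ≤ ((5/4)*C*t - d) * n := by rw [sub_mul, hdd]; linarith
      have := (mul_nonneg_iff_of_pos_right hn).mp h0
      linarith
  -- A ≥ (s - (11/4)*C*t)^2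
  have hsum2 : ∑ i, (v - (x i - m)^2) = n*v - ∑ i, (x i - m)^2 := by
    rw [Finset.sum_sub_distrib, Finset.sum_const, Finset.card_univ,
      Fintype.card_fin, nsmul_eq_mul]
  rw [hsum2] at h2
  have hA : (s - (11/4)*C*t)^2 ≤ 1/(n:ℝ) * (∑ i, (x i - m)^2) := by
    rw [one_div_mul_eq_div, le_div_iff₀ hn]
    have key : (s - (11/4)*C*t)^2 * n ≤ (v - (13/5)*C*s*t) * n := by
      have h1 : (29/10)*C*t*s - (121/16)*C^2*t^2 ≥ 0 := by nlinarith
      nlinarith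
    nlinarith
  have hsqA : s - (11/4)*C*t ≤ Real.sqrt (1/(n:ℝ) * (∑ i, (x i - m)^2)) := by
    calc s - (11/4)*C*t ≤ |s - (11/4)*C*t| := le_abs_self _
      _ = Real.sqrt ((s - (11/4)*C*t)^2) := (Real.sqrt_sq_eq_abs _).symm
      _ ≤ _ := Real.sqrt_le_sqrt hA
  have := sqrt_sub_sq' (A := 1/(n:ℝ) * (∑ i, (x i - m)^2)) (d := d)
  linarith

lemma tail_bound {Ω : Type*} [MeasurableSpace Ω] {μ : Measure Ω} [IsProbabilityMeasure μ]
    {n : ℕ} {V : Fin n → Ω → ℝ} (hm : ∀ i, Measurable (V i))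
    (hind : iIndepFun V μ) {lam Q ε L : ℝ} (hlam : 0 < lam)
    (h1 : ∀ i, ∀ᵐ ω ∂μ, |lam * V i ω| ≤ 1) (hmean : ∀ i, ∫ ω, V i ω ∂μ = 0)
    (hQ : ∀ i, ∫ ω, (V i ω)^2 ∂μ ≤ Q)
    (hexp : -lam * ε + n * ((13/18)*lam^2*Q) ≤ -2*L) :
    μ {ω | ε ≤ ∑ i, V i ω} ≤ ENNReal.ofReal (Real.exp (-(2*L))) := by
  refine (chernoff_bd hm hind hlam.le
    (fun i => integrable_exp_mul_of_ae (hm i) (h1 i))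
    (fun i => mgf_le_quad (hm i) hlam (h1 i) (hmean i) (hQ i))).trans ?_
  exact ENNReal.ofReal_le_ofReal (Real.exp_le_exp.mpr (by linarith))

set_option maxHeartbeats 4000000 in
/-- Concentration of the empirical standard deviation: for i.i.d. `X₁,…,Xₙ ∈ [0,C]`,
with probability at least `1 - δ`,
`|√V̂ₙ - √Var(X)| ≤ 4C √(ln(2/δ)/n)`, where
`V̂ₙ = (1/n)∑Xᵢ² - ((1/n)∑Xᵢ)²` and `Var(X) = E[X²] - (E[X])²`. -/
theorem stmt_14 {Ω : Type*} [MeasurableSpace Ω] (μ : Measure Ω) [IsProbabilityMeasure μ]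
    (n : ℕ) (hn : 1 ≤ n) (C : ℝ) (hC : 0 < C) (X : Fin n → Ω → ℝ)
    (hmeas : ∀ i, Measurable (X i))
    (hindep : iIndepFun X μ)
    (hident : ∀ i j, IdentDistrib (X i) (X j) μ μ)
    (hbdd : ∀ i, ∀ᵐ ω ∂μ, X i ω ∈ Set.Icc 0 C)
    (i₀ : Fin n) (δ : ℝ) (hδ : δ ∈ Set.Ioo (0 : ℝ) 1) :
    ENNReal.ofReal (1 - δ) ≤
      μ {ω |
        |Real.sqrt ((1 / (n : ℝ)) * ∑ i, (X i ω) ^ 2 - ((1 / (n : ℝ)) * ∑ i, X i ω) ^ 2) -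
          Real.sqrt (∫ ω', (X i₀ ω') ^ 2 ∂μ - (∫ ω', X i₀ ω' ∂μ) ^ 2)| ≤
        4 * C * Real.sqrt (Real.log (2 / δ) / n)} := by
  have hδ0 : 0 < δ := hδ.1
  have hδ1 : δ < 1 := hδ.2
  have hn0 : (0:ℝ) < n := by exact_mod_cast Nat.lt_of_lt_of_le Nat.zero_lt_one hn
  have hn' : (n:ℝ) ≠ 0 := ne_of_gt hn0
  set m := ∫ ω', X i₀ ω' ∂μ with hm_def
  set v2 := ∫ ω', (X i₀ ω') ^ 2 ∂μ with hv2_def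
  set t := Real.sqrt (Real.log (2 / δ) / n) with ht_def
  set Lr := Real.log (2 / δ) with hLr_def
  have hLr : 0 < Lr := Real.log_pos (by rw [lt_div_iff₀ hδ0]; linarith)
  have ht0 : 0 < t := Real.sqrt_pos.mpr (by positivity)
  have ht2 : (n:ℝ) * t^2 = Lr := by
    rw [ht_def, Real.sq_sqrt (by positivity : (0:ℝ) ≤ Lr / n)]
    field_simp
  -- basic integrability / moment facts
  have hXae : ∀ i, ∀ᵐ ω ∂μ, 0 ≤ X i ω ∧ X i ω ≤ C :=
    fun i => (hbdd i).mono fun ω h => ⟨h.1, h.2⟩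
  have hXint : ∀ i, Integrable (X i) μ := fun i =>
    (integrable_const C).mono' (hmeas i).aestronglyMeasurable
      ((hXae i).mono fun ω h => by
        rw [Real.norm_eq_abs, abs_of_nonneg h.1]; exact h.2)
  have hX2int : ∀ i, Integrable (fun ω => (X i ω)^2) μ := fun i =>
    (integrable_const (C^2)).mono' ((hmeas i).pow_const 2).aestronglyMeasurable
      ((hXae i).mono fun ω h => by
        rw [Real.norm_eq_abs, abs_of_nonneg (sq_nonneg _)]; nlinarith [h.1, h.2])
  have hmi : ∀ i, ∫ ω, X i ω ∂μ = m := fun i => (hident i i₀).integral_eq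
  have hv2i : ∀ i, ∫ ω, (X i ω)^2 ∂μ = v2 := fun i =>
    ((hident i i₀).comp (measurable_id.pow_const 2)).integral_eq
  have hm0 : 0 ≤ m := integral_nonneg_of_ae ((hbdd i₀).mono fun ω h => h.1)
  have hmC : m ≤ C := by
    have h := integral_mono_ae (hXint i₀) (integrable_const C)
      ((hbdd i₀).mono fun ω h => h.2)
    simpa using h
  set v := v2 - m^2 with hv_def
  have hXmae : ∀ i, ∀ᵐ ω ∂μ, (X i ω - m)^2 ≤ C^2 := fun i =>
    (hXae i).mono fun ω h => by nlinarith [h.1, h.2]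
  have hYint : ∀ i, Integrable (fun ω => (X i ω - m)^2) μ := fun i =>
    (integrable_const (C^2)).mono'
      (((hmeas i).sub_const m).pow_const 2).aestronglyMeasurable
      ((hXmae i).mono fun ω h => by
        rw [Real.norm_eq_abs, abs_of_nonneg (sq_nonneg _)]; exact h)
  have hY2int : ∀ i, Integrable (fun ω => ((X i ω - m)^2)^2) μ := fun i =>
    (integrable_const (C^4)).mono'
      ((((hmeas i).sub_const m).pow_const 2).pow_const 2).aestronglyMeasurable
      ((hXmae i).mono fun ω h => by
        rw [Real.norm_eq_abs, abs_of_nonneg (sq_nonneg _)]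
        nlinarith [sq_nonneg (X i ω - m)])
  have hYi : ∀ i, ∫ ω, (X i ω - m)^2 ∂μ = v := fun i => by
    rw [integral_sq_sub' (hXint i) (hX2int i) m, hmi i, hv2i i, hv_def]; ring
  have hv0 : 0 ≤ v := by
    rw [← hYi i₀]; exact integral_nonneg fun ω => sq_nonneg _
  have hv2Cm : v2 ≤ C * m := by
    have h := integral_mono_ae (hX2int i₀) ((hXint i₀).const_mul C)
      ((hXae i₀).mono fun ω h => by dsimp only; nlinarith [h.1, h.2])
    rwa [integral_const_mul, hmi i₀] at h
  have hvC4 : v ≤ C^2/4 := by rw [hv_def]; nlinarith [hv2Cm, hm0, hmC, sq_nonneg (C - 2*m)]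
  have hsv2 : Real.sqrt v ≤ C/2 := by
    rw [show C/2 = Real.sqrt ((C/2)^2) from (Real.sqrt_sq (by positivity)).symm]
    exact Real.sqrt_le_sqrt (by nlinarith)
  have hY2 : ∀ i, ∫ ω, ((X i ω - m)^2)^2 ∂μ ≤ C^2 * v := fun i => by
    have h := integral_mono_ae (hY2int i) ((hYint i).const_mul (C^2))
      ((hXmae i).mono fun ω h => by dsimp only; nlinarith [sq_nonneg (X i ω - m)])
    rwa [integral_const_mul, hYi i] at h
  have hZ1sq : ∀ i, ∫ ω, ((X i ω - m)^2 - v)^2 ∂μ ≤ C^2*v := fun i => by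
    rw [integral_sq_sub' (hYint i) (hY2int i) v, hYi i]
    nlinarith [hY2 i, sq_nonneg v]
  have hZ1mean : ∀ i, ∫ ω, ((X i ω - m)^2 - v) ∂μ = 0 := fun i => by
    rw [integral_sub (hYint i) (integrable_const v), hYi i, integral_const]; simp
  have hZ1ae : ∀ i, ∀ᵐ ω ∂μ, |(X i ω - m)^2 - v| ≤ C^2 := fun i =>
    (hXmae i).mono fun ω h => abs_le.mpr
      ⟨by nlinarith [sq_nonneg (X i ω - m), hv0, hvC4, sq_nonneg C],
       by nlinarith [sq_nonneg (X i ω - m), hv0]⟩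
  have hXmabs : ∀ i, ∀ᵐ ω ∂μ, |X i ω - m| ≤ C := fun i =>
    (hXae i).mono fun ω h => abs_le.mpr ⟨by linarith [h.1, hmC], by linarith [h.2, hm0]⟩
  -- the event
  set E := {ω |
      |Real.sqrt (1 / (n : ℝ) * ∑ i, (X i ω) ^ 2 - (1 / (n : ℝ) * ∑ i, X i ω) ^ 2) -
        Real.sqrt v| ≤ 4 * C * t} with hE_def
  show ENNReal.ofReal (1 - δ) ≤ μ E
  have hEmeas : MeasurableSet E := by
    apply measurableSet_le _ measurable_const
    apply Measurable.abs
    apply Measurable.sub _ measurable_const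
    apply Real.continuous_sqrt.measurable.comp
    exact ((Finset.measurable_sum Finset.univ fun i _ => (hmeas i).pow_const 2).const_mul
        (1/(n:ℝ))).sub
      (((Finset.measurable_sum Finset.univ fun i _ => hmeas i).const_mul (1/(n:ℝ))).pow_const 2)
  -- reduce to complement bound
  suffices hcompl : μ Eᶜ ≤ ENNReal.ofReal δ by
    have h1 : μ E = 1 - μ Eᶜ := by
      have h2 := prob_compl_eq_one_sub (μ := μ) hEmeas.compl
      rwa [compl_compl] at h2
    calc ENNReal.ofReal (1 - δ) = ENNReal.ofReal 1 - ENNReal.ofReal δ :=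
          ENNReal.ofReal_sub 1 hδ0.le
      _ = 1 - ENNReal.ofReal δ := by rw [ENNReal.ofReal_one]
      _ ≤ 1 - μ Eᶜ := tsub_le_tsub_left hcompl 1
      _ = μ E := h1.symm
  -- trivial regime: t ≥ 1/8
  by_cases htriv : (1:ℝ)/8 ≤ t
  · have hae : ∀ᵐ ω ∂μ, ω ∈ E := by
      have hall : ∀ᵐ ω ∂μ, ∀ i, X i ω ∈ Set.Icc 0 C := (MeasureTheory.ae_all_iff).mpr hbdd
      filter_upwards [hall] with ω h
      have hS2 : ∑ i, (X i ω)^2 ≤ C * ∑ i, X i ω := by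
        rw [Finset.mul_sum]
        exact Finset.sum_le_sum fun i _ => by nlinarith [(h i).1, (h i).2]
      have hS0 : 0 ≤ ∑ i, X i ω := Finset.sum_nonneg fun i _ => (h i).1
      have hvhat : 1/(n:ℝ) * ∑ i, (X i ω)^2 - (1/(n:ℝ) * ∑ i, X i ω)^2 ≤ C^2/4 := by
        have h1 : 1/(n:ℝ) * ∑ i, (X i ω)^2 ≤ C * (1/(n:ℝ) * ∑ i, X i ω) := by
          rw [← mul_assoc, mul_comm C (1/(n:ℝ)), mul_assoc]
          exact mul_le_mul_of_nonneg_left hS2 (by positivity)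
        nlinarith [sq_nonneg (C/2 - 1/(n:ℝ) * ∑ i, X i ω)]
      have hsq : Real.sqrt (1/(n:ℝ) * ∑ i, (X i ω)^2 - (1/(n:ℝ) * ∑ i, X i ω)^2) ≤ C/2 := by
        rw [show C/2 = Real.sqrt ((C/2)^2) from (Real.sqrt_sq (by positivity)).symm]
        exact Real.sqrt_le_sqrt (by nlinarith)
      have hsqn := Real.sqrt_nonneg
        (1/(n:ℝ) * ∑ i, (X i ω)^2 - (1/(n:ℝ) * ∑ i, X i ω)^2)
      have hsvn := Real.sqrt_nonneg v
      have h4 : C/2 ≤ 4*C*t := by nlinarith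
      simp only [hE_def, Set.mem_setOf_eq]
      rw [abs_le]
      exact ⟨by linarith, by linarith⟩
    have h0 : μ Eᶜ = 0 := by
      have := ae_iff.mp hae
      simpa [Set.compl_def] using this
    rw [h0]; exact zero_le
  · -- main regime: t < 1/8
    push_neg at htriv
    have ht8 : t ≤ 1/8 := le_of_lt htriv

    -- tail bounds
    have hq4 : Real.exp (-(2*Lr)) = δ^2/4 := by
      have hexpL : Real.exp (-Lr) = δ/2 := by
        rw [hLr_def, Real.exp_neg, Real.exp_log (by positivity), inv_div]
      rw [show -(2*Lr) = (-Lr) + (-Lr) by ring, Real.exp_add, hexpL]; ring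
    have hmu3 : μ {ω | (n:ℝ)*((5/4)*C*t) ≤ ∑ i, (X i ω - m)}
        ≤ ENNReal.ofReal (Real.exp (-(2*Lr))) := by
      refine tail_bound (lam := (45/13)*t/C) (Q := C^2/4)
        (fun i => (hmeas i).sub_const m)
        (hindep.comp (fun _ x => x - m) (fun _ => measurable_id.sub_const m))
        (by positivity) (fun i => ?_) (fun i => ?_) (fun i => ?_) ?_
      · filter_upwards [hXmabs i] with ω h
        rw [abs_mul, abs_of_pos (show (0:ℝ) < (45/13)*t/C by positivity)]
        calc (45/13)*t/C * |X i ω - m| ≤ (45/13)*t/C * C :=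
              mul_le_mul_of_nonneg_left h (by positivity)
          _ = (45/13)*t := by field_simp
          _ ≤ 1 := by nlinarith
      · rw [integral_sub (hXint i) (integrable_const m), hmi i, integral_const]; simp
      · exact (hYi i).le.trans hvC4
      · have he : -((45/13)*t/C) * ((n:ℝ)*((5/4)*C*t))
            + (n:ℝ)*((13/18)*((45/13)*t/C)^2*(C^2/4))
            = -(2025/936)*((n:ℝ)*t^2) := by field_simp; ring
        rw [he, ht2]; linarith
    have hmu4 : μ {ω | (n:ℝ)*((5/4)*C*t) ≤ ∑ i, (m - X i ω)}
        ≤ ENNReal.ofReal (Real.exp (-(2*Lr))) := by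
      refine tail_bound (lam := (45/13)*t/C) (Q := C^2/4)
        (fun i => measurable_const.sub (hmeas i))
        (hindep.comp (fun _ x => m - x) (fun _ => measurable_const.sub measurable_id))
        (by positivity) (fun i => ?_) (fun i => ?_) (fun i => ?_) ?_
      · filter_upwards [hXmabs i] with ω h
        rw [abs_mul, abs_of_pos (show (0:ℝ) < (45/13)*t/C by positivity)]
        have h' : |m - X i ω| ≤ C := by rw [abs_sub_comm]; exact h
        calc (45/13)*t/C * |m - X i ω| ≤ (45/13)*t/C * C :=
              mul_le_mul_of_nonneg_left h' (by positivity)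
          _ = (45/13)*t := by field_simp
          _ ≤ 1 := by nlinarith
      · show ∫ ω, (m - X i ω) ∂μ = 0; rw [integral_sub (integrable_const m) (hXint i), hmi i, integral_const]; simp
      · have e : (fun ω => (m - X i ω)^2) = fun ω => (X i ω - m)^2 := by ext ω; ring
        calc ∫ ω, (m - X i ω)^2 ∂μ = ∫ ω, (X i ω - m)^2 ∂μ := by rw [e]
          _ ≤ C^2/4 := (hYi i).le.trans hvC4
      · have he : -((45/13)*t/C) * ((n:ℝ)*((5/4)*C*t))
            + (n:ℝ)*((13/18)*((45/13)*t/C)^2*(C^2/4))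
            = -(2025/936)*((n:ℝ)*t^2) := by field_simp; ring
        rw [he, ht2]; linarith
    have hmu1 : μ {ω | (n:ℝ)*(8*C*Real.sqrt v*t + 8*C^2*t^2) ≤ ∑ i, ((X i ω - m)^2 - v)}
        ≤ ENNReal.ofReal (Real.exp (-(2*Lr))) := by
      have hindZ1 : iIndepFun
          (fun i => fun ω => (X i ω - m)^2 - v) μ :=
        hindep.comp (fun _ x => (x - m)^2 - v)
          (fun _ => ((measurable_id.sub_const m).pow_const 2).sub_const v)
      have hmZ1 : ∀ i, Measurable (fun ω => (X i ω - m)^2 - v) :=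
        fun i => (((hmeas i).sub_const m).pow_const 2).sub_const v
      rcases le_or_gt (C^2*t^2) v with hvt | hvt
      · have hs0 : 0 < Real.sqrt v := Real.sqrt_pos.mpr (lt_of_lt_of_le (by positivity) hvt)
        have hss : Real.sqrt v ^ 2 = v := Real.sq_sqrt hv0
        have hsCt : C*t ≤ Real.sqrt v := by
          rw [show C*t = Real.sqrt ((C*t)^2) from (Real.sqrt_sq (by positivity)).symm]
          exact Real.sqrt_le_sqrt (by nlinarith)
        have hlam : (0:ℝ) < t/(C*Real.sqrt v) := div_pos ht0 (mul_pos hC hs0)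
        refine tail_bound (lam := t/(C*Real.sqrt v)) (Q := C^2*(Real.sqrt v)^2) hmZ1 hindZ1 hlam
          (fun i => ?_) hZ1mean (fun i => by rw [hss]; exact hZ1sq i) ?_
        · filter_upwards [hZ1ae i] with ω h
          rw [abs_mul, abs_of_pos hlam]
          calc t/(C*Real.sqrt v) * |(X i ω - m)^2 - v| ≤ t/(C*Real.sqrt v) * C^2 :=
                mul_le_mul_of_nonneg_left h hlam.le
            _ = (C*t)/Real.sqrt v := by field_simp
            _ ≤ 1 := by rw [div_le_one hs0]; exact hsCt
        · have he : ∀ s : ℝ, 0 < s → -(t/(C*s)) * ((n:ℝ)*(8*C*s*t + 8*C^2*t^2))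
              + (n:ℝ)*((13/18)*(t/(C*s))^2*(C^2*s^2))
              = -(8*((n:ℝ)*t^2) + 8*(C*t/s)*((n:ℝ)*t^2))
                + (13/18)*((n:ℝ)*t^2) := by
            intro s hs; field_simp
          rw [he (Real.sqrt v) hs0, ht2]
          have hpos : 0 ≤ 8*(C*t/Real.sqrt v)*Lr := by positivity
          linarith
      · have hlam : (0:ℝ) < 1/C^2 := by positivity
        refine tail_bound (lam := 1/C^2) (Q := C^2*v) hmZ1 hindZ1 hlam
          (fun i => ?_) hZ1mean hZ1sq ?_
        · filter_upwards [hZ1ae i] with ω h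
          rw [abs_mul, abs_of_pos hlam]
          calc 1/C^2 * |(X i ω - m)^2 - v| ≤ 1/C^2 * C^2 :=
                mul_le_mul_of_nonneg_left h hlam.le
            _ = 1 := by field_simp
        · have he : -(1/C^2) * ((n:ℝ)*(8*C*Real.sqrt v*t + 8*C^2*t^2))
              + (n:ℝ)*((13/18)*(1/C^2)^2*(C^2*v))
              = -(8*(Real.sqrt v*t/C)*(n:ℝ) + 8*((n:ℝ)*t^2)) + (13/18)*((n:ℝ)*v)/C^2 := by
            field_simp
          rw [he, ht2]
          have hdiv : (13/18)*((n:ℝ)*v)/C^2 ≤ (13/18)*Lr := by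
            rw [div_le_iff₀ (by positivity)]
            calc (13/18)*((n:ℝ)*v) ≤ (13/18)*((n:ℝ)*(C^2*t^2)) := by
                  have := mul_le_mul_of_nonneg_left hvt.le (le_of_lt hn0)
                  nlinarith
              _ = (13/18)*Lr*C^2 := by rw [show (n:ℝ)*(C^2*t^2) = ((n:ℝ)*t^2)*C^2 by ring, ht2]; ring
          have hpos : 0 ≤ 8*(Real.sqrt v*t/C)*(n:ℝ) := by positivity
          linarith
    -- case split on the size of sqrt v
    rcases le_or_gt ((27/10)*C*t) (Real.sqrt v) with hbig | hsmall
    · -- large variance: need lower tail of Y too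
      have hs0 : 0 < Real.sqrt v := lt_of_lt_of_le (by positivity) hbig
      have hss : Real.sqrt v ^ 2 = v := Real.sq_sqrt hv0
      have hmu2 : μ {ω | (n:ℝ)*((13/5)*C*Real.sqrt v*t) ≤ ∑ i, (v - (X i ω - m)^2)}
          ≤ ENNReal.ofReal (Real.exp (-(2*Lr))) := by
        have hlam : (0:ℝ) < (9/5)*t/(C*Real.sqrt v) := div_pos (by positivity) (mul_pos hC hs0)
        refine tail_bound (lam := (9/5)*t/(C*Real.sqrt v)) (Q := C^2*(Real.sqrt v)^2)
          (fun i => measurable_const.sub (((hmeas i).sub_const m).pow_const 2))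
          (hindep.comp (fun _ x => v - (x - m)^2)
            (fun _ => measurable_const.sub ((measurable_id.sub_const m).pow_const 2)))
          hlam (fun i => ?_) (fun i => ?_) (fun i => ?_) ?_
        · filter_upwards [hZ1ae i] with ω h
          rw [abs_mul, abs_of_pos hlam]
          have h' : |v - (X i ω - m)^2| ≤ C^2 := by rw [abs_sub_comm]; exact h
          calc (9/5)*t/(C*Real.sqrt v) * |v - (X i ω - m)^2|
              ≤ (9/5)*t/(C*Real.sqrt v) * C^2 := mul_le_mul_of_nonneg_left h' hlam.le
            _ = ((9/5)*C*t)/Real.sqrt v := by field_simp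
            _ ≤ 1 := by
                rw [div_le_one hs0]
                nlinarith [mul_pos hC ht0]
        · show ∫ ω, (v - (X i ω - m)^2) ∂μ = 0; rw [integral_sub (integrable_const v) (hYint i), hYi i, integral_const]; simp
        · have e : (fun ω => (v - (X i ω - m)^2)^2) = fun ω => ((X i ω - m)^2 - v)^2 := by
            ext ω; ring
          calc ∫ ω, (v - (X i ω - m)^2)^2 ∂μ = ∫ ω, ((X i ω - m)^2 - v)^2 ∂μ := by rw [e]
            _ ≤ C^2*(Real.sqrt v)^2 := by rw [hss]; exact hZ1sq i
        · have he : ∀ s : ℝ, 0 < s → -((9/5)*t/(C*s)) * ((n:ℝ)*((13/5)*C*s*t))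
              + (n:ℝ)*((13/18)*((9/5)*t/(C*s))^2*(C^2*s^2))
              = -(117/50)*((n:ℝ)*t^2) := by
            intro s hs; field_simp; ring
          rw [he (Real.sqrt v) hs0, ht2]; linarith
      have hsub : Eᶜ ⊆ ({ω | (n:ℝ)*(8*C*Real.sqrt v*t + 8*C^2*t^2) ≤ ∑ i, ((X i ω - m)^2 - v)}
          ∪ {ω | (n:ℝ)*((13/5)*C*Real.sqrt v*t) ≤ ∑ i, (v - (X i ω - m)^2)})
          ∪ ({ω | (n:ℝ)*((5/4)*C*t) ≤ ∑ i, (X i ω - m)}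
          ∪ {ω | (n:ℝ)*((5/4)*C*t) ≤ ∑ i, (m - X i ω)}) := by
        intro ω hω
        by_contra hnot
        simp only [Set.mem_union, Set.mem_setOf_eq, not_or] at hnot
        obtain ⟨⟨h1', h2'⟩, h3', h4'⟩ := hnot
        apply hω
        simp only [hE_def, Set.mem_setOf_eq]
        rw [abs_le]
        constructor
        · linarith [det_lower_main hn0 hC ht0 hv0 hbig (le_of_not_ge h2')
            (le_of_not_ge h3') (le_of_not_ge h4')]
        · linarith [det_upper hn0 hC ht0.le hv0 (le_of_not_ge h1')]
      calc μ Eᶜ ≤ _ := measure_mono hsub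
        _ ≤ (μ {ω | (n:ℝ)*(8*C*Real.sqrt v*t + 8*C^2*t^2) ≤ ∑ i, ((X i ω - m)^2 - v)}
              + μ {ω | (n:ℝ)*((13/5)*C*Real.sqrt v*t) ≤ ∑ i, (v - (X i ω - m)^2)})
            + (μ {ω | (n:ℝ)*((5/4)*C*t) ≤ ∑ i, (X i ω - m)}
              + μ {ω | (n:ℝ)*((5/4)*C*t) ≤ ∑ i, (m - X i ω)}) :=
          le_trans (measure_union_le _ _)
            (add_le_add (measure_union_le _ _) (measure_union_le _ _))
        _ ≤ (ENNReal.ofReal (Real.exp (-(2*Lr))) + ENNReal.ofReal (Real.exp (-(2*Lr))))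
            + (ENNReal.ofReal (Real.exp (-(2*Lr))) + ENNReal.ofReal (Real.exp (-(2*Lr)))) :=
          add_le_add (add_le_add hmu1 hmu2) (add_le_add hmu3 hmu4)
        _ = ENNReal.ofReal (Real.exp (-(2*Lr)) + Real.exp (-(2*Lr))
              + (Real.exp (-(2*Lr)) + Real.exp (-(2*Lr)))) := by
          rw [← ENNReal.ofReal_add (by positivity) (by positivity),
            ← ENNReal.ofReal_add (by positivity) (by positivity)]
        _ ≤ ENNReal.ofReal δ := ENNReal.ofReal_le_ofReal (by nlinarith [hq4, hδ0, hδ1])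
    · -- small variance: no lower tail needed
      have hsub : Eᶜ ⊆ {ω | (n:ℝ)*(8*C*Real.sqrt v*t + 8*C^2*t^2) ≤ ∑ i, ((X i ω - m)^2 - v)}
          ∪ ({ω | (n:ℝ)*((5/4)*C*t) ≤ ∑ i, (X i ω - m)}
          ∪ {ω | (n:ℝ)*((5/4)*C*t) ≤ ∑ i, (m - X i ω)}) := by
        intro ω hω
        by_contra hnot
        simp only [Set.mem_union, Set.mem_setOf_eq, not_or] at hnot
        obtain ⟨h1', h3', h4'⟩ := hnot
        apply hω
        simp only [hE_def, Set.mem_setOf_eq]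
        rw [abs_le]
        constructor
        · have hnn := Real.sqrt_nonneg
            (1/(n:ℝ) * ∑ i, (X i ω)^2 - (1/(n:ℝ) * ∑ i, X i ω)^2)
          nlinarith [mul_pos hC ht0, hsmall.le]
        · linarith [det_upper hn0 hC ht0.le hv0 (le_of_not_ge h1')]
      calc μ Eᶜ ≤ _ := measure_mono hsub
        _ ≤ μ {ω | (n:ℝ)*(8*C*Real.sqrt v*t + 8*C^2*t^2) ≤ ∑ i, ((X i ω - m)^2 - v)}
            + (μ {ω | (n:ℝ)*((5/4)*C*t) ≤ ∑ i, (X i ω - m)}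
              + μ {ω | (n:ℝ)*((5/4)*C*t) ≤ ∑ i, (m - X i ω)}) :=
          le_trans (measure_union_le _ _) (add_le_add le_rfl (measure_union_le _ _))
        _ ≤ ENNReal.ofReal (Real.exp (-(2*Lr)))
            + (ENNReal.ofReal (Real.exp (-(2*Lr))) + ENNReal.ofReal (Real.exp (-(2*Lr)))) :=
          add_le_add hmu1 (add_le_add hmu3 hmu4)
        _ = ENNReal.ofReal (Real.exp (-(2*Lr))
              + (Real.exp (-(2*Lr)) + Real.exp (-(2*Lr)))) := by
          rw [← ENNReal.ofReal_add (by positivity) (by positivity),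
            ← ENNReal.ofReal_add (by positivity) (by positivity)]
        _ ≤ ENNReal.ofReal δ := ENNReal.ofReal_le_ofReal (by nlinarith [hq4, hδ0, hδ1])
end

section
/- Let {Y_t}_{t≥1} be a sequence of random variables adapted to a filtration {F_t}, with 0 ≤ Y_t ≤ C almost surely. Then for any T ∈ ℕ and δ ∈ (0,1), with probability at least 1 - δ: ∑_{t=1}^T Y_t ≤ 2·∑_{t=1}^T E[Y_t | F_{t-1}] + 4C·ln(1/δ). -/
open MeasureTheory ProbabilityTheory Filter

lemma exp_le_one_add_two_mul {x : ℝ} (h0 : 0 ≤ x) (h1 : x ≤ 1) :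
    Real.exp x ≤ 1 + 2 * x := by
  have hc := convexOn_exp.2 (Set.mem_univ (0 : ℝ)) (Set.mem_univ (1 : ℝ))
    (by linarith : (0:ℝ) ≤ 1 - x) h0 (by ring)
  simp only [smul_eq_mul, mul_zero, mul_one, zero_add, Real.exp_zero] at hc
  have he : Real.exp 1 ≤ 3 := by
    have := Real.exp_one_lt_d9; linarith
  nlinarith

section Super

variable {Ω : Type*} {m0 : MeasurableSpace Ω} (μ : Measure Ω) [IsProbabilityMeasure μ]
  (𝓕 : Filtration ℕ m0) (Z : ℕ → Ω → ℝ)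

/-- The exponent process -/
noncomputable def Sproc (n : ℕ) (ω : Ω) : ℝ :=
  ∑ t ∈ Finset.range n, (Z (t + 1) ω - 2 * (μ[Z (t + 1) | 𝓕 t]) ω)

variable (hadapted : ∀ t, StronglyMeasurable[𝓕 t] (Z t))
  (hbdd : ∀ t, ∀ᵐ ω ∂μ, Z t ω ∈ Set.Icc 0 1)

include hadapted in
lemma Sproc_meas (n : ℕ) : StronglyMeasurable[𝓕 n] (Sproc μ 𝓕 Z n) := by
  apply Finset.stronglyMeasurable_fun_sum
  intro t ht
  rw [Finset.mem_range] at ht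
  exact ((hadapted (t+1)).mono (𝓕.mono ht)).sub
    ((stronglyMeasurable_condExp.mono (𝓕.mono ht.le)).const_mul 2)

include hadapted hbdd in
lemma condexp_mem_Icc (t : ℕ) : ∀ᵐ ω ∂μ, (μ[Z (t+1) | 𝓕 t]) ω ∈ Set.Icc (0:ℝ) 1 := by
  have hint : Integrable (Z (t+1)) μ := by
    refine (memLp_top_of_bound ((hadapted (t+1)).mono (𝓕.le _)).aestronglyMeasurable 1
      ?_).integrable le_top
    filter_upwards [hbdd (t+1)] with ω hω
    rw [Real.norm_eq_abs, abs_le]; exact ⟨by linarith [hω.1], hω.2⟩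
  have h0 : (0:Ω→ℝ) ≤ᵐ[μ] μ[Z (t+1) | 𝓕 t] :=
    condExp_nonneg ((hbdd (t+1)).mono fun ω hω => hω.1)
  have h1 : μ[Z (t+1) | 𝓕 t] ≤ᵐ[μ] μ[(fun _ => (1:ℝ)) | 𝓕 t] :=
    condExp_mono hint (integrable_const 1) ((hbdd (t+1)).mono fun ω hω => hω.2)
  rw [condExp_const (𝓕.le t) (1:ℝ)] at h1
  filter_upwards [h0, h1] with ω h0 h1
  exact ⟨h0, h1⟩

include hadapted hbdd in
lemma Sproc_abs_bdd (n : ℕ) : ∀ᵐ ω ∂μ, |Sproc μ 𝓕 Z n ω| ≤ 2 * n := by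
  filter_upwards [ae_all_iff.2 hbdd, ae_all_iff.2
    (fun t => condexp_mem_Icc μ 𝓕 Z hadapted hbdd t)] with ω hZ hc
  calc |Sproc μ 𝓕 Z n ω| ≤ ∑ t ∈ Finset.range n, |Z (t+1) ω - 2 * (μ[Z (t+1) | 𝓕 t]) ω| :=
        Finset.abs_sum_le_sum_abs _ _
    _ ≤ ∑ t ∈ Finset.range n, 2 := by
        refine Finset.sum_le_sum fun t _ => ?_
        have h1 := hZ (t+1); have h2 := hc t
        simp only [Set.mem_Icc] at h1 h2
        rw [abs_le]
        constructor <;> nlinarith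
    _ = 2 * n := by simp [mul_comm]

include hadapted hbdd in
lemma exp_Sproc_integrable (n : ℕ) :
    Integrable (fun ω => Real.exp (Sproc μ 𝓕 Z n ω)) μ := by
  refine (memLp_top_of_bound (Real.continuous_exp.comp_stronglyMeasurable
    ((Sproc_meas μ 𝓕 Z hadapted n).mono (𝓕.le n))).aestronglyMeasurable
    (Real.exp (2*n)) ?_).integrable le_top
  filter_upwards [Sproc_abs_bdd μ 𝓕 Z hadapted hbdd n] with ω hω
  rw [Real.norm_eq_abs, abs_of_pos (Real.exp_pos _)]
  exact Real.exp_le_exp.2 (le_of_abs_le hω)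

include hadapted hbdd in
lemma Zint (t : ℕ) : Integrable (Z (t+1)) μ := by
  refine (memLp_top_of_bound ((hadapted (t+1)).mono (𝓕.le _)).aestronglyMeasurable 1
    ?_).integrable le_top
  filter_upwards [hbdd (t+1)] with ω hω
  rw [Real.norm_eq_abs, abs_le]; exact ⟨by linarith [hω.1], hω.2⟩

include hadapted hbdd in
lemma integral_exp_Sproc_le (n : ℕ) :
    ∫ ω, Real.exp (Sproc μ 𝓕 Z n ω) ∂μ ≤ 1 := by
  induction n with
  | zero => simp [Sproc]
  | succ n ih =>
    set c : Ω → ℝ := μ[Z (n+1) | 𝓕 n] with hcdef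
    set f : Ω → ℝ := fun ω => Real.exp (Sproc μ 𝓕 Z n ω) * Real.exp (-(2 * c ω)) with hfdef
    set g : Ω → ℝ := fun ω => Real.exp (Z (n+1) ω) with hgdef
    have hcb : ∀ᵐ ω ∂μ, c ω ∈ Set.Icc (0:ℝ) 1 := condexp_mem_Icc μ 𝓕 Z hadapted hbdd n
    have hfmeas : StronglyMeasurable[𝓕 n] f :=
      (Real.continuous_exp.comp_stronglyMeasurable (Sproc_meas μ 𝓕 Z hadapted n)).mul
        (Real.continuous_exp.comp_stronglyMeasurable
          ((stronglyMeasurable_condExp.const_mul 2).neg))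
    have hfbdd : ∀ᵐ ω ∂μ, ‖f ω‖ ≤ Real.exp (2*n) := by
      filter_upwards [Sproc_abs_bdd μ 𝓕 Z hadapted hbdd n, hcb] with ω h1 h2
      simp only [hfdef]
      rw [Real.norm_eq_abs, abs_of_pos (by positivity), ← Real.exp_add]
      refine Real.exp_le_exp.2 ?_
      have := le_of_abs_le h1
      have := h2.1
      linarith
    have hgint : Integrable g μ := by
      refine (memLp_top_of_bound (Real.continuous_exp.comp_stronglyMeasurable
        ((hadapted (n+1)).mono (𝓕.le _))).aestronglyMeasurable (Real.exp 1)
        ?_).integrable le_top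
      filter_upwards [hbdd (n+1)] with ω hω
      rw [Real.norm_eq_abs, abs_of_pos (Real.exp_pos _)]
      exact Real.exp_le_exp.2 hω.2
    have hpull : μ[f * g | 𝓕 n] =ᵐ[μ] f * μ[g | 𝓕 n] :=
      condExp_stronglyMeasurable_mul_of_bound (𝓕.le n) hfmeas hgint (Real.exp (2*n)) hfbdd
    have hfg_eq : (fun ω => Real.exp (Sproc μ 𝓕 Z (n+1) ω)) = f * g := by
      funext ω
      simp only [hfdef, hgdef, Pi.mul_apply, ← Real.exp_add, Sproc, Finset.sum_range_succ]
      congr 1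
      ring
    have hfgint : Integrable (f * g) μ := by
      rw [← hfg_eq]; exact exp_Sproc_integrable μ 𝓕 Z hadapted hbdd (n+1)
    -- the conditional Jensen-type bound
    have hkey : μ[g | 𝓕 n] ≤ᵐ[μ] fun ω => Real.exp (2 * c ω) := by
      have hrhsint : Integrable (fun ω => 1 + 2 * Z (n+1) ω) μ :=
        (integrable_const 1).add ((Zint μ 𝓕 Z hadapted hbdd n).const_mul 2)
      have h1 : μ[g | 𝓕 n] ≤ᵐ[μ] μ[(fun ω => 1 + 2 * Z (n+1) ω) | 𝓕 n] := by
        refine condExp_mono hgint hrhsint ?_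
        filter_upwards [hbdd (n+1)] with ω hω
        exact exp_le_one_add_two_mul hω.1 hω.2
      have h2 : μ[(fun ω => 1 + 2 * Z (n+1) ω) | 𝓕 n] =ᵐ[μ] fun ω => 1 + 2 * c ω := by
        have ha : (fun ω => 1 + 2 * Z (n+1) ω)
            = (fun _ => (1:ℝ)) + (2:ℝ) • (Z (n+1)) := by
          funext ω; simp [smul_eq_mul]
        rw [ha]
        have := condExp_add (μ := μ) (m := 𝓕 n) (integrable_const (1:ℝ))
          ((Zint μ 𝓕 Z hadapted hbdd n).smul (2:ℝ))
        refine this.trans ?_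
        have h3 := condExp_smul (μ := μ) (m := 𝓕 n) (2:ℝ) (Z (n+1))
        rw [condExp_const (𝓕.le n) (1:ℝ)]
        filter_upwards [h3] with ω h3
        simp only [Pi.add_apply, Pi.smul_apply, smul_eq_mul] at h3 ⊢
        rw [h3]
      filter_upwards [h1, h2] with ω h1 h2
      calc (μ[g | 𝓕 n]) ω ≤ 1 + 2 * c ω := by rw [← h2]; exact h1
        _ ≤ Real.exp (2 * c ω) := by linarith [Real.add_one_le_exp (2 * c ω)]
    have hfexp_eq : (fun ω => f ω * Real.exp (2 * c ω))
        = fun ω => Real.exp (Sproc μ 𝓕 Z n ω) := by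
      funext ω
      simp only [hfdef]
      rw [mul_assoc, ← Real.exp_add]
      norm_num
    have hcondgbdd : ∀ᵐ ω ∂μ, ‖(μ[g | 𝓕 n]) ω‖ ≤ Real.exp 2 := by
      have hnn : 0 ≤ᵐ[μ] μ[g | 𝓕 n] :=
        condExp_nonneg (Filter.Eventually.of_forall fun ω => (Real.exp_pos _).le)
      filter_upwards [hkey, hnn, hcb] with ω h1 h2 h3
      rw [Real.norm_eq_abs, abs_of_nonneg h2]
      refine h1.trans (Real.exp_le_exp.2 ?_)
      linarith [h3.2]
    have hint1 : Integrable (f * μ[g | 𝓕 n]) μ := by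
      refine (memLp_top_of_bound ((hfmeas.mono (𝓕.le n)).mul
        (stronglyMeasurable_condExp.mono (𝓕.le n))).aestronglyMeasurable
        (Real.exp (2*n) * Real.exp 2) ?_).integrable le_top
      filter_upwards [hfbdd, hcondgbdd] with ω h1 h2
      rw [Pi.mul_apply, norm_mul]
      exact mul_le_mul h1 h2 (norm_nonneg _) (Real.exp_pos _).le
    have hint2 : Integrable (fun ω => f ω * Real.exp (2 * c ω)) μ := by
      rw [hfexp_eq]; exact exp_Sproc_integrable μ 𝓕 Z hadapted hbdd n
    calc ∫ ω, Real.exp (Sproc μ 𝓕 Z (n+1) ω) ∂μ = ∫ ω, (f * g) ω ∂μ := by rw [hfg_eq]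
      _ = ∫ ω, (μ[f * g | 𝓕 n]) ω ∂μ := (integral_condExp (𝓕.le n)).symm
      _ = ∫ ω, (f * μ[g | 𝓕 n]) ω ∂μ := integral_congr_ae hpull
      _ ≤ ∫ ω, f ω * Real.exp (2 * c ω) ∂μ := by
          refine integral_mono_ae hint1 hint2 ?_
          filter_upwards [hkey] with ω hω
          have hfpos : 0 ≤ f ω := by
            simp only [hfdef]; positivity
          exact mul_le_mul_of_nonneg_left hω hfpos
      _ = ∫ ω, Real.exp (Sproc μ 𝓕 Z n ω) ∂μ := by rw [hfexp_eq]
      _ ≤ 1 := ih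

end Super

/-- Freedman consequence (Efroni et al. 2021, Lemma 27, second inequality): for an
adapted sequence `Y_t ∈ [0, C]`, with probability at least `1 - δ`,
`∑_{t=1}^T Y_t ≤ 2 ∑_{t=1}^T E[Y_t | F_{t-1}] + 4C ln(1/δ)`. -/
theorem stmt_15 {Ω : Type*} {m0 : MeasurableSpace Ω} (μ : Measure Ω) [IsProbabilityMeasure μ]
    (𝓕 : Filtration ℕ m0) (Y : ℕ → Ω → ℝ) (C : ℝ) (hC : 0 < C)
    (hadapted : ∀ t, StronglyMeasurable[𝓕 t] (Y t))
    (hbdd : ∀ t, ∀ᵐ ω ∂μ, Y t ω ∈ Set.Icc 0 C)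
    (T : ℕ) (δ : ℝ) (hδ : δ ∈ Set.Ioo (0 : ℝ) 1) :
    ENNReal.ofReal (1 - δ) ≤
      μ {ω | ∑ t ∈ Finset.range T, Y (t + 1) ω ≤
        2 * ∑ t ∈ Finset.range T, (μ[Y (t + 1) | 𝓕 t]) ω + 4 * C * Real.log (1 / δ)} := by
  obtain ⟨hδ0, hδ1⟩ := hδ
  set Z : ℕ → Ω → ℝ := fun t ω => C⁻¹ * Y t ω with hZdef
  have hadZ : ∀ t, StronglyMeasurable[𝓕 t] (Z t) := fun t => (hadapted t).const_mul C⁻¹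
  have hbddZ : ∀ t, ∀ᵐ ω ∂μ, Z t ω ∈ Set.Icc (0:ℝ) 1 := by
    intro t
    filter_upwards [hbdd t] with ω hω
    have h0 := hω.1; have h1 := hω.2
    constructor
    · positivity
    · rw [hZdef]
      rw [inv_mul_le_iff₀ hC]; linarith
  have hint := exp_Sproc_integrable μ 𝓕 Z hadZ hbddZ T
  have hS := integral_exp_Sproc_le μ 𝓕 Z hadZ hbddZ T
  have hmarkov := mul_meas_ge_le_integral_of_nonneg
    (Filter.Eventually.of_forall fun ω => (Real.exp_pos (Sproc μ 𝓕 Z T ω)).le) hint (1/δ)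
  set A := {ω | 1/δ ≤ Real.exp (Sproc μ 𝓕 Z T ω)} with hAdef
  have hAmeas : MeasurableSet A :=
    measurableSet_le measurable_const
      (Real.continuous_exp.comp_stronglyMeasurable
        ((Sproc_meas μ 𝓕 Z hadZ T).mono (𝓕.le T))).measurable
  have hAtoReal : (μ A).toReal ≤ δ := by
    have h2 : (1/δ) * (μ A).toReal ≤ 1 := hmarkov.trans hS
    have h3 := mul_le_mul_of_nonneg_left h2 hδ0.le
    rw [← mul_assoc, mul_one_div, div_self hδ0.ne', one_mul, mul_one] at h3
    exact h3
  have hAδ : μ A ≤ ENNReal.ofReal δ := by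
    rw [← ENNReal.ofReal_toReal (measure_ne_top μ A)]
    exact ENNReal.ofReal_le_ofReal hAtoReal
  have hcompl : ENNReal.ofReal (1 - δ) ≤ μ Aᶜ := by
    rw [prob_compl_eq_one_sub hAmeas]
    calc ENNReal.ofReal (1 - δ) = 1 - ENNReal.ofReal δ := by
          rw [ENNReal.ofReal_sub _ hδ0.le, ENNReal.ofReal_one]
      _ ≤ 1 - μ A := tsub_le_tsub_left hAδ 1
  -- almost-everywhere facts
  have hAE : ∀ᵐ ω ∂μ, (∀ t, (μ[Z (t+1) | 𝓕 t]) ω = C⁻¹ * (μ[Y (t+1) | 𝓕 t]) ω) ∧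
      (∀ t, 0 ≤ (μ[Y (t+1) | 𝓕 t]) ω) := by
    rw [eventually_and]
    constructor
    · rw [ae_all_iff]
      intro t
      have hzy : Z (t+1) = C⁻¹ • Y (t+1) := rfl
      have := condExp_smul (μ := μ) (m := 𝓕 t) (C⁻¹) (Y (t+1))
      rw [← hzy] at this
      filter_upwards [this] with ω hω
      rw [hω]; simp [smul_eq_mul]
    · rw [ae_all_iff]
      intro t
      exact condExp_nonneg ((hbdd (t+1)).mono fun ω hω => hω.1)
  set P : Ω → Prop := fun ω => (∀ t, (μ[Z (t+1) | 𝓕 t]) ω = C⁻¹ * (μ[Y (t+1) | 𝓕 t]) ω) ∧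
      (∀ t, 0 ≤ (μ[Y (t+1) | 𝓕 t]) ω) with hPdef
  have hnull : μ {ω | ¬ P ω} = 0 := ae_iff.mp hAE
  have hL0 : 0 ≤ Real.log (1/δ) := Real.log_nonneg (by rw [le_div_iff₀ hδ0]; linarith)
  have hsub : Aᶜ ∩ {ω | P ω} ⊆ {ω | ∑ t ∈ Finset.range T, Y (t + 1) ω ≤
        2 * ∑ t ∈ Finset.range T, (μ[Y (t + 1) | 𝓕 t]) ω + 4 * C * Real.log (1 / δ)} := by
    rintro ω ⟨hωA, hωP⟩
    simp only [Set.mem_compl_iff, hAdef, Set.mem_setOf_eq, not_le] at hωA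
    have hSlog : Sproc μ 𝓕 Z T ω ≤ Real.log (1/δ) := by
      have := (Real.lt_log_iff_exp_lt (by positivity)).2 hωA
      exact this.le
    have hSeq : Sproc μ 𝓕 Z T ω
        = C⁻¹ * (∑ t ∈ Finset.range T, Y (t+1) ω
            - 2 * ∑ t ∈ Finset.range T, (μ[Y (t+1) | 𝓕 t]) ω) := by
      rw [Sproc]
      have hterm : ∀ t ∈ Finset.range T, Z (t+1) ω - 2 * (μ[Z (t+1) | 𝓕 t]) ω
          = C⁻¹ * (Y (t+1) ω - 2 * (μ[Y (t+1) | 𝓕 t]) ω) := by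
        intro t _
        rw [hωP.1 t]
        simp only [hZdef]
        ring
      calc ∑ t ∈ Finset.range T, (Z (t+1) ω - 2 * (μ[Z (t+1) | 𝓕 t]) ω)
          = ∑ t ∈ Finset.range T, C⁻¹ * (Y (t+1) ω - 2 * (μ[Y (t+1) | 𝓕 t]) ω) :=
            Finset.sum_congr rfl hterm
        _ = C⁻¹ * ∑ t ∈ Finset.range T, (Y (t+1) ω - 2 * (μ[Y (t+1) | 𝓕 t]) ω) :=
            (Finset.mul_sum _ _ _).symm
        _ = _ := by rw [Finset.sum_sub_distrib, ← Finset.mul_sum]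
    rw [hSeq] at hSlog
    simp only [Set.mem_setOf_eq]
    set SY := ∑ t ∈ Finset.range T, Y (t+1) ω
    set SE := ∑ t ∈ Finset.range T, (μ[Y (t+1) | 𝓕 t]) ω
    have hmul := mul_le_mul_of_nonneg_left hSlog hC.le
    rw [← mul_assoc, mul_inv_cancel₀ hC.ne', one_mul] at hmul
    nlinarith
  calc ENNReal.ofReal (1 - δ) ≤ μ Aᶜ := hcompl
    _ ≤ μ ((Aᶜ ∩ {ω | P ω}) ∪ {ω | ¬ P ω}) := by
        refine measure_mono fun ω hω => ?_
        by_cases h : P ω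
        · exact Or.inl ⟨hω, h⟩
        · exact Or.inr h
    _ ≤ μ (Aᶜ ∩ {ω | P ω}) + μ {ω | ¬ P ω} := measure_union_le _ _
    _ = μ (Aᶜ ∩ {ω | P ω}) := by rw [hnull, add_zero]
    _ ≤ _ := measure_mono hsub
end

section
/- Let {Y_t}_{t≥1} be adapted to a filtration {F_t} with 0 ≤ Y_t ≤ C a.s. Then for any T ∈ ℕ and δ ∈ (0,1), with probability at least 1 - δ: ∑_{t=1}^T E[Y_t | F_{t-1}] ≤ (1 + 1/(2C))·∑_{t=1}^T Y_t + 2(2C+1)²·ln(1/δ). -/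
open MeasureTheory ProbabilityTheory

private lemma exp_neg_le_quad {u : ℝ} (hu : 0 ≤ u) :
    Real.exp (-u) ≤ 1 - u + u ^ 2 := by
  have h1 : (0:ℝ) < 1 + u := by linarith
  have h2 : Real.exp (-u) ≤ (1 + u)⁻¹ := by
    rw [Real.exp_neg]
    exact inv_anti₀ h1 (by linarith [Real.add_one_le_exp u])
  refine h2.trans ?_
  rw [inv_le_iff_one_le_mul₀ h1]
  nlinarith [pow_nonneg hu 3]

/-- Freedman consequence (Efroni et al. 2021, Lemma 27, first inequality): for an
adapted sequence `Y_t ∈ [0, C]`, with probability at least `1 - δ`,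
`∑_{t=1}^T E[Y_t | F_{t-1}] ≤ (1 + 1/(2C)) ∑_{t=1}^T Y_t + 2(2C+1)² ln(1/δ)`. -/
theorem stmt_16 {Ω : Type*} {m0 : MeasurableSpace Ω} (μ : Measure Ω) [IsProbabilityMeasure μ]
    (𝓕 : Filtration ℕ m0) (Y : ℕ → Ω → ℝ) (C : ℝ) (hC : 0 < C)
    (hadapted : ∀ t, StronglyMeasurable[𝓕 t] (Y t))
    (hbdd : ∀ t, ∀ᵐ ω ∂μ, Y t ω ∈ Set.Icc 0 C)
    (T : ℕ) (δ : ℝ) (hδ : δ ∈ Set.Ioo (0 : ℝ) 1) :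
    ENNReal.ofReal (1 - δ) ≤
      μ {ω | ∑ t ∈ Finset.range T, (μ[Y (t + 1) | 𝓕 t]) ω ≤
        (1 + 1 / (2 * C)) * ∑ t ∈ Finset.range T, Y (t + 1) ω +
          2 * (2 * C + 1) ^ 2 * Real.log (1 / δ)} := by
  obtain ⟨hδ0, hδ1⟩ := hδ
  have h2C1 : (0:ℝ) < 2 * C + 1 := by linarith
  set l : ℝ := 1 / (C * (2 * C + 1)) with hl_def
  set c : ℝ := 2 / (2 * C + 1) ^ 2 with hc_def
  have hl_pos : 0 < l := by positivity
  have hc_pos : 0 < c := by positivity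
  have hcl : c = l - l ^ 2 * C := by
    rw [hc_def, hl_def]; field_simp; ring
  set g : ℕ → Ω → ℝ := fun t => μ[Y (t + 1)|𝓕 t] with hg_def
  set S : ℕ → Ω → ℝ := fun t ω => ∑ i ∈ Finset.range t, Y (i + 1) ω with hS_def
  set A : ℕ → Ω → ℝ := fun t ω => ∑ i ∈ Finset.range t, g i ω with hA_def
  set M : ℕ → Ω → ℝ := fun t ω => Real.exp (c * A t ω - l * S t ω) with hM_def
  -- measurability
  have hgsm : ∀ t, StronglyMeasurable[𝓕 t] (g t) := fun t => stronglyMeasurable_condExp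
  have hSsm : ∀ t, StronglyMeasurable[𝓕 t] (S t) := by
    intro t
    exact Finset.stronglyMeasurable_fun_sum _ fun i hi =>
      (hadapted (i + 1)).mono (𝓕.mono (Nat.succ_le_of_lt (Finset.mem_range.mp hi)))
  have hAsm : ∀ t, StronglyMeasurable[𝓕 t] (A t) := by
    intro t
    exact Finset.stronglyMeasurable_fun_sum _ fun i hi =>
      (hgsm i).mono (𝓕.mono (Finset.mem_range.mp hi).le)
  have hMsm : ∀ t, StronglyMeasurable[𝓕 t] (M t) := by
    intro t
    exact Real.continuous_exp.comp_stronglyMeasurable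
      (((hAsm t).const_mul c).sub ((hSsm t).const_mul l))
  -- integrability of Y
  have hYint : ∀ t, Integrable (Y t) μ := by
    intro t
    refine Integrable.mono' (integrable_const C)
      (((hadapted t).mono (𝓕.le t)).aestronglyMeasurable) ?_
    filter_upwards [hbdd t] with ω h
    rw [Real.norm_eq_abs, abs_le]
    exact ⟨by linarith [h.1], h.2⟩
  -- bounds on g
  have hg_bdd : ∀ t, ∀ᵐ ω ∂μ, g t ω ∈ Set.Icc 0 C := by
    intro t
    have h0 : 0 ≤ᵐ[μ] g t :=
      condExp_nonneg (by filter_upwards [hbdd (t + 1)] with ω h using h.1)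
    have h1 : g t ≤ᵐ[μ] fun _ => C := by
      have hmono := condExp_mono (m := 𝓕 t) (μ := μ) (hYint (t + 1)) (integrable_const C)
        (by filter_upwards [hbdd (t + 1)] with ω h using h.2)
      rw [condExp_const (𝓕.le t)] at hmono
      exact hmono
    filter_upwards [h0, h1] with ω h0' h1' using ⟨h0', h1'⟩
  -- the key conditional bound
  have hEint : ∀ t, Integrable (fun ω => Real.exp (-(l * Y (t + 1) ω))) μ := by
    intro t
    refine Integrable.mono' (integrable_const 1)
      ((Real.continuous_exp.comp_stronglyMeasurable
        ((((hadapted (t + 1)).mono (𝓕.le (t + 1))).const_mul l).neg)).aestronglyMeasurable) ?_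
    filter_upwards [hbdd (t + 1)] with ω h
    rw [Real.norm_eq_abs, abs_of_pos (Real.exp_pos _)]
    rw [Real.exp_le_one_iff]
    nlinarith [hl_pos, h.1]
  have hkey : ∀ t, (μ[fun ω => Real.exp (-(l * Y (t + 1) ω))|𝓕 t])
      ≤ᵐ[μ] fun ω => Real.exp (-(c * g t ω)) := by
    intro t
    have hptwise : (fun ω => Real.exp (-(l * Y (t + 1) ω)))
        ≤ᵐ[μ] fun ω => 1 - c * Y (t + 1) ω := by
      filter_upwards [hbdd (t + 1)] with ω h
      have hu : 0 ≤ l * Y (t + 1) ω := mul_nonneg hl_pos.le h.1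
      have h2 := exp_neg_le_quad hu
      have hsq : (l * Y (t + 1) ω) ^ 2 ≤ l ^ 2 * C * Y (t + 1) ω := by
        have hy2 : Y (t + 1) ω ^ 2 ≤ C * Y (t + 1) ω := by nlinarith [h.1, h.2]
        calc (l * Y (t + 1) ω) ^ 2 = l ^ 2 * Y (t + 1) ω ^ 2 := by ring
          _ ≤ l ^ 2 * (C * Y (t + 1) ω) := mul_le_mul_of_nonneg_left hy2 (sq_nonneg l)
          _ = l ^ 2 * C * Y (t + 1) ω := by ring
      rw [hcl]; nlinarith
    have hrint : Integrable (fun ω => 1 - c * Y (t + 1) ω) μ :=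
      (integrable_const 1).sub ((hYint (t + 1)).const_mul c)
    have h1 := condExp_mono (m := 𝓕 t) (hEint t) hrint hptwise
    have hfeq : (fun ω => 1 - c * Y (t + 1) ω) = (fun _ => (1:ℝ)) - c • Y (t + 1) := by
      funext ω; simp [smul_eq_mul]
    have h2 : μ[fun ω => 1 - c * Y (t + 1) ω|𝓕 t] =ᵐ[μ] fun ω => 1 - c * g t ω := by
      rw [hfeq]
      refine (condExp_sub (integrable_const 1) ((hYint (t + 1)).smul c) (𝓕 t)).trans ?_
      rw [condExp_const (𝓕.le t)]
      have h3 := condExp_smul (μ := μ) (m := 𝓕 t) c (Y (t + 1))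
      filter_upwards [h3] with ω h3'
      simp only [Pi.sub_apply, Pi.smul_apply, smul_eq_mul] at h3' ⊢
      rw [h3']
    filter_upwards [h1, h2] with ω hω1 hω2
    calc (μ[fun ω => Real.exp (-(l * Y (t + 1) ω))|𝓕 t]) ω
        ≤ (μ[fun ω => 1 - c * Y (t + 1) ω|𝓕 t]) ω := hω1
      _ = 1 - c * g t ω := hω2
      _ ≤ Real.exp (-(c * g t ω)) := by
          linarith [Real.add_one_le_exp (-(c * g t ω))]
  -- a.e. bounds on S and A
  have hS_nonneg : ∀ t, ∀ᵐ ω ∂μ, 0 ≤ S t ω := by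
    intro t
    have := ae_all_iff.mpr fun i : ℕ => hbdd (i + 1)
    filter_upwards [this] with ω hω
    exact Finset.sum_nonneg fun i _ => (hω i).1
  have hA_le : ∀ t, ∀ᵐ ω ∂μ, A t ω ≤ t * C := by
    intro t
    have := ae_all_iff.mpr fun i : ℕ => hg_bdd i
    filter_upwards [this] with ω hω
    calc A t ω ≤ ∑ i ∈ Finset.range t, C := Finset.sum_le_sum fun i _ => (hω i).2
      _ = t * C := by simp [mul_comm]
  have hM_bd : ∀ t, ∀ᵐ ω ∂μ, M t ω ≤ Real.exp (c * (t * C)) := by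
    intro t
    filter_upwards [hS_nonneg t, hA_le t] with ω h1 h2
    apply Real.exp_le_exp.mpr
    nlinarith [hl_pos, hc_pos]
  have hMint : ∀ t, Integrable (M t) μ := by
    intro t
    refine Integrable.mono' (integrable_const (Real.exp (c * (t * C))))
      (((hMsm t).mono (𝓕.le t)).aestronglyMeasurable) ?_
    filter_upwards [hM_bd t] with ω h
    rw [Real.norm_eq_abs, abs_of_pos (Real.exp_pos _)]
    exact h
  -- main supermartingale estimate
  have hmain : ∀ t, ∫ ω, M t ω ∂μ ≤ 1 := by
    intro t
    induction t with
    | zero => simp [hM_def, hA_def, hS_def]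
    | succ t ih =>
      set G : Ω → ℝ := fun ω => M t ω * Real.exp (c * g t ω) with hG_def
      set E : Ω → ℝ := fun ω => Real.exp (-(l * Y (t + 1) ω)) with hE_def
      have hGsm : StronglyMeasurable[𝓕 t] G :=
        (hMsm t).mul (Real.continuous_exp.comp_stronglyMeasurable ((hgsm t).const_mul c))
      have hG_nonneg : ∀ ω, 0 ≤ G ω := fun ω =>
        mul_nonneg (Real.exp_pos _).le (Real.exp_pos _).le
      have hGE_eq : M (t + 1) = G * E := by
        funext ω
        simp only [hM_def, hG_def, hE_def, Pi.mul_apply, hA_def, hS_def,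
          Finset.sum_range_succ, ← Real.exp_add]
        congr 1
        ring
      have hprod_int : Integrable (G * E) μ := by rw [← hGE_eq]; exact hMint (t + 1)
      have hGM_eq : (fun ω => G ω * Real.exp (-(c * g t ω))) = M t := by
        funext ω
        simp only [hG_def, hM_def, mul_assoc]
        rw [← Real.exp_add, ← Real.exp_add]
        congr 1
        ring
      have hpull := condExp_mul_of_stronglyMeasurable_left hGsm hprod_int (hEint t)
      calc ∫ ω, M (t + 1) ω ∂μ = ∫ ω, (G * E) ω ∂μ := by rw [hGE_eq]
        _ = ∫ ω, (μ[G * E|𝓕 t]) ω ∂μ := (integral_condExp (𝓕.le t)).symm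
        _ = ∫ ω, (G * μ[E|𝓕 t]) ω ∂μ := integral_congr_ae hpull
        _ ≤ ∫ ω, G ω * Real.exp (-(c * g t ω)) ∂μ := by
            refine integral_mono_ae (integrable_condExp.congr hpull) ?_ ?_
            · rw [hGM_eq]; exact hMint t
            · filter_upwards [hkey t] with ω hω
              simpa only [Pi.mul_apply] using
                mul_le_mul_of_nonneg_left hω (hG_nonneg ω)
        _ = ∫ ω, M t ω ∂μ := by rw [hGM_eq]
        _ ≤ 1 := ih
  -- Markov's inequality
  set B : Set Ω := {ω | 1 / δ ≤ M T ω} with hB_def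
  have hBmeas : MeasurableSet B :=
    measurableSet_le measurable_const ((hMsm T).mono (𝓕.le T)).measurable
  have hmarkov := mul_meas_ge_le_integral_of_nonneg
    (ae_of_all μ fun ω => (Real.exp_pos _).le) (hMint T) (1 / δ)
  have hμB : μ B ≤ ENNReal.ofReal δ := by
    have h2 : (1 / δ) * (μ B).toReal ≤ 1 := hmarkov.trans (hmain T)
    have h1 : (μ B).toReal ≤ δ := by
      have h3 := mul_le_mul_of_nonneg_left h2 hδ0.le
      rw [← mul_assoc, mul_one_div, div_self hδ0.ne', one_mul, mul_one] at h3
      exact h3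
    rw [← ENNReal.ofReal_toReal (measure_ne_top μ B)]
    exact ENNReal.ofReal_le_ofReal h1
  -- the complement of B is contained in the target event
  have hsub : Bᶜ ⊆ {ω | ∑ t ∈ Finset.range T, (μ[Y (t + 1)|𝓕 t]) ω ≤
      (1 + 1 / (2 * C)) * ∑ t ∈ Finset.range T, Y (t + 1) ω +
        2 * (2 * C + 1) ^ 2 * Real.log (1 / δ)} := by
    intro ω hω
    simp only [hB_def, Set.mem_compl_iff, Set.mem_setOf_eq, not_le] at hω
    have hlog : c * A T ω - l * S T ω < Real.log (1 / δ) := by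
      calc c * A T ω - l * S T ω = Real.log (M T ω) := (Real.log_exp _).symm
        _ < Real.log (1 / δ) := Real.log_lt_log (Real.exp_pos _) hω
    have hlogpos : 0 < Real.log (1 / δ) := Real.log_pos (one_lt_one_div hδ0 hδ1)
    have hkey2 : c * ((1 + 1 / (2 * C)) * S T ω + 2 * (2 * C + 1) ^ 2 * Real.log (1 / δ))
        = l * S T ω + 4 * Real.log (1 / δ) := by
      rw [hc_def, hl_def]; field_simp; ring
    have hfin : c * A T ω < c * ((1 + 1 / (2 * C)) * S T ω
        + 2 * (2 * C + 1) ^ 2 * Real.log (1 / δ)) := by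
      rw [hkey2]; linarith
    have := le_of_lt ((mul_lt_mul_iff_right₀ hc_pos).mp hfin)
    exact this
  calc ENNReal.ofReal (1 - δ)
      = 1 - ENNReal.ofReal δ := by
        rw [ENNReal.ofReal_sub 1 hδ0.le, ENNReal.ofReal_one]
    _ ≤ 1 - μ B := tsub_le_tsub_left hμB 1
    _ = μ Bᶜ := by
        rw [measure_compl hBmeas (measure_ne_top μ B), measure_univ]
    _ ≤ _ := measure_mono hsub
end
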